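/- arXiv:1209.0444 — 5 statements merged into one kernel-verified Lean document; each statement's English description precedes it below -/
import Mathlib

section
/- Let T̄ > 0 and suppose there exist symmetric positive definite n×n matrices P_1, …, P_N such that (i) A_i^T P_i + P_i A_i ≺ 0 for every i ∈ {1,…,N}, and (ii) exp(A_i^T T̄) P_j exp(A_i T̄) − P_i ≺ 0 for all i, j ∈ {1,…,N} with i ≠ j. Then the switched system ẋ = A_{σ(t)} x is globally asymptotically stable over the class of switching sequences satisfying the minimum dwell-time condition t_{k+1} − t_k ≥ T̄ for all k. -/
open Matrix Filter Topology
open NormedSpace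

section Aux
variable {n : ℕ}

lemma quad_bounds (hn : 1 ≤ n) (Q : Matrix (Fin n) (Fin n) ℝ) :
    ∃ a b : ℝ, (Q.PosDef → 0 < a ∧ a ≤ b) ∧ ∀ v : Fin n → ℝ,
      a * (∑ i, v i ^ 2) ≤ v ⬝ᵥ (Q *ᵥ v) ∧ v ⬝ᵥ (Q *ᵥ v) ≤ b * (∑ i, v i ^ 2) := by
  haveI : NeZero n := ⟨by omega⟩
  set f : (Fin n → ℝ) → ℝ := fun v => v ⬝ᵥ (Q *ᵥ v) with hf
  have hfc : Continuous f := by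
    show Continuous fun v : Fin n → ℝ => ∑ i, v i * ∑ j, Q i j * v j
    exact continuous_finset_sum _ fun i _ => (continuous_apply i).mul
      (continuous_finset_sum _ fun j _ => continuous_const.mul (continuous_apply j))
  have hcont2 : Continuous fun v : Fin n → ℝ => ∑ i, v i ^ 2 :=
    continuous_finset_sum _ fun i _ => (continuous_apply i).pow 2
  set S : Set (Fin n → ℝ) := {v | ∑ i, v i ^ 2 = 1} with hS
  have hSc : IsCompact S := by
    apply Metric.isCompact_of_isClosed_isBounded
    · exact isClosed_eq hcont2 continuous_const
    · rw [Metric.isBounded_iff_subset_closedBall 0]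
      refine ⟨1, fun v hv => ?_⟩
      rw [Metric.mem_closedBall, dist_zero_right]
      rw [pi_norm_le_iff_of_nonneg zero_le_one]
      intro i
      have h2 : v i ^ 2 ≤ 1 := by
        calc v i ^ 2 ≤ ∑ j, v j ^ 2 :=
              Finset.single_le_sum (fun j _ => sq_nonneg (v j)) (Finset.mem_univ i)
          _ = 1 := hv
      rw [Real.norm_eq_abs]
      nlinarith [sq_abs (v i), abs_nonneg (v i)]
  have hSne : S.Nonempty := by
    refine ⟨(Pi.single 0 1 : Fin n → ℝ), ?_⟩
    have : (∑ i, (Pi.single 0 1 : Fin n → ℝ) i ^ 2) = 1 := by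
      rw [Finset.sum_eq_single (0 : Fin n)]
      · simp
      · intro j _ hj; simp [Pi.single_apply, hj]
      · simp
    exact this
  obtain ⟨va, hvaS, hva⟩ := hSc.exists_isMinOn hSne hfc.continuousOn
  obtain ⟨vb, hvbS, hvb⟩ := hSc.exists_isMaxOn hSne hfc.continuousOn
  have key : ∀ v : Fin n → ℝ,
      f va * (∑ i, v i ^ 2) ≤ f v ∧ f v ≤ f vb * (∑ i, v i ^ 2) := by
    intro v
    by_cases hv : v = 0
    · subst hv; simp [hf]
    · have hsum : 0 < ∑ i, v i ^ 2 := by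
        obtain ⟨i, hi⟩ := Function.ne_iff.mp hv
        have h0 : 0 < v i ^ 2 :=
          lt_of_le_of_ne (sq_nonneg _) (Ne.symm (pow_ne_zero 2 hi))
        calc (0:ℝ) < v i ^ 2 := h0
          _ ≤ ∑ j, v j ^ 2 :=
            Finset.single_le_sum (fun j _ => sq_nonneg (v j)) (Finset.mem_univ i)
      set c : ℝ := Real.sqrt (∑ i, v i ^ 2) with hc
      have hcpos : 0 < c := Real.sqrt_pos.mpr hsum
      have hc2 : c ^ 2 = ∑ i, v i ^ 2 := Real.sq_sqrt hsum.le
      set u : Fin n → ℝ := c⁻¹ • v with hu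
      have huS : u ∈ S := by
        show (∑ i, u i ^ 2) = 1
        simp only [hu, Pi.smul_apply, smul_eq_mul, mul_pow, ← Finset.mul_sum]
        rw [← hc2]
        field_simp
      have hfv : f v = c ^ 2 * f u := by
        have hvcu : v = c • u := by
          rw [hu, smul_smul, mul_inv_cancel₀ hcpos.ne', one_smul]
        rw [hvcu]
        simp only [hf, Matrix.mulVec_smul, smul_dotProduct, dotProduct_smul,
          smul_eq_mul]
        ring
      have h1 : f va ≤ f u := hva huS
      have h2 : f u ≤ f vb := hvb huS
      constructor
      · rw [hfv, ← hc2]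
        calc f va * c ^ 2 = c ^ 2 * f va := by ring
          _ ≤ c ^ 2 * f u := mul_le_mul_of_nonneg_left h1 (sq_nonneg c)
      · rw [hfv, ← hc2]
        calc c ^ 2 * f u ≤ c ^ 2 * f vb := mul_le_mul_of_nonneg_left h2 (sq_nonneg c)
          _ = f vb * c ^ 2 := by ring
  refine ⟨f va, f vb, fun hQ => ⟨?_, ?_⟩, key⟩
  · have hva0 : va ≠ 0 := by
      intro h
      rw [hS] at hvaS
      simp only [Set.mem_setOf_eq, h] at hvaS
      simp at hvaS
    have := hQ.dotProduct_mulVec_pos hva0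
    simpa [hf] using this
  · exact hva hvbS

lemma quad_conj (E B : Matrix (Fin n) (Fin n) ℝ) (v : Fin n → ℝ) :
    v ⬝ᵥ ((Eᵀ * B * E) *ᵥ v) = (E *ᵥ v) ⬝ᵥ (B *ᵥ (E *ᵥ v)) := by
  rw [← Matrix.mulVec_mulVec, ← Matrix.mulVec_mulVec, Matrix.dotProduct_mulVec,
    Matrix.vecMul_transpose]
lemma quad_exp_le (A P : Matrix (Fin n) (Fin n) ℝ)
    (hL : (-(Aᵀ * P + P * A)).PosSemidef) (v : Fin n → ℝ) {s : ℝ} (hs : 0 ≤ s) :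
    (exp (s • A) *ᵥ v) ⬝ᵥ (P *ᵥ (exp (s • A) *ᵥ v)) ≤ v ⬝ᵥ (P *ᵥ v) := by
  letI : SeminormedRing (Matrix (Fin n) (Fin n) ℝ) := Matrix.linftyOpSemiNormedRing
  letI : NormedRing (Matrix (Fin n) (Fin n) ℝ) := Matrix.linftyOpNormedRing
  letI : NormedAlgebra ℝ (Matrix (Fin n) (Fin n) ℝ) := Matrix.linftyOpNormedAlgebra
  let L : Matrix (Fin n) (Fin n) ℝ →ₗ[ℝ] ℝ :=
    { toFun := fun M => v ⬝ᵥ (M *ᵥ v)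
      map_add' := by
        intro M N; simp [Matrix.add_mulVec]
      map_smul' := by
        intro c M; simp [Matrix.smul_mulVec] }
  let Lc : Matrix (Fin n) (Fin n) ℝ →L[ℝ] ℝ := LinearMap.toContinuousLinearMap L
  set g : ℝ → ℝ := fun u => Lc ((exp (u • Aᵀ) * P) * exp (u • A)) with hg
  have e1 : ∀ u : ℝ, exp (u • Aᵀ) = (exp (u • A))ᵀ := by
    intro u; rw [← Matrix.transpose_smul, Matrix.exp_transpose]
  have hF : ∀ u : ℝ, HasDerivAt g
      (Lc ((exp (u • A))ᵀ * (Aᵀ * P + P * A) * exp (u • A))) u := by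
    intro u
    have h1 : HasDerivAt (fun u : ℝ => exp (u • A)) (exp (u • A) * A) u :=
      hasDerivAt_exp_smul_const A u
    have h2 : HasDerivAt (fun u : ℝ => exp (u • Aᵀ) * P) (exp (u • Aᵀ) * Aᵀ * P) u :=
      (hasDerivAt_exp_smul_const Aᵀ u).mul_const P
    have hmul := h2.mul h1
    have hcomm : A * exp (u • A) = exp (u • A) * A :=
      (Commute.exp_right ((Commute.refl A).smul_right u)).eq
    have heq : exp (u • Aᵀ) * Aᵀ * P * exp (u • A)
        + exp (u • Aᵀ) * P * (exp (u • A) * A)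
        = (exp (u • A))ᵀ * (Aᵀ * P + P * A) * exp (u • A) := by
      rw [e1 u, ← hcomm]
      noncomm_ring
    have := Lc.hasFDerivAt.comp_hasDerivAt u hmul
    rw [heq] at this
    exact this
  have hanti : Antitone g := by
    apply antitone_of_deriv_nonpos (fun u => (hF u).differentiableAt)
    intro u
    rw [(hF u).deriv]
    have hLc : Lc ((exp (u • A))ᵀ * (Aᵀ * P + P * A) * exp (u • A))
        = (exp (u • A) *ᵥ v) ⬝ᵥ ((Aᵀ * P + P * A) *ᵥ (exp (u • A) *ᵥ v)) := by
      show v ⬝ᵥ _ = _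
      rw [quad_conj]
    rw [hLc]
    have h0 := hL.dotProduct_mulVec_nonneg (exp (u • A) *ᵥ v)
    rw [Matrix.neg_mulVec, dotProduct_neg] at h0
    simp only [star_trivial] at h0
    linarith
  have hgs := hanti hs
  have e2 : g s = (exp (s • A) *ᵥ v) ⬝ᵥ (P *ᵥ (exp (s • A) *ᵥ v)) := by
    show v ⬝ᵥ _ = _
    rw [e1 s, quad_conj]
  have e3 : g 0 = v ⬝ᵥ (P *ᵥ v) := by
    show v ⬝ᵥ _ = _
    simp [exp_zero]
  rw [e2, e3] at hgs
  exact hgs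
lemma quad_contraction (hn : 1 ≤ n) (Pm M : Matrix (Fin n) (Fin n) ℝ)
    (hP : Pm.PosDef) (hPM : (Pm - M).PosDef) :
    ∃ ρ : ℝ, 0 ≤ ρ ∧ ρ < 1 ∧
      ∀ v : Fin n → ℝ, v ⬝ᵥ (M *ᵥ v) ≤ ρ * (v ⬝ᵥ (Pm *ᵥ v)) := by
  obtain ⟨c, cB, hcpos, hclo⟩ := quad_bounds hn (Pm - M)
  obtain ⟨a, b, hab, hP2⟩ := quad_bounds hn Pm
  obtain ⟨ha, hab'⟩ := hab hP
  have hc : 0 < c := (hcpos hPM).1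
  have hb : 0 < b := lt_of_lt_of_le ha hab'
  refine ⟨max 0 (1 - c / b), le_max_left _ _, ?_, ?_⟩
  · apply max_lt one_pos
    have : 0 < c / b := div_pos hc hb
    linarith
  · intro v
    have hsum0 : (0:ℝ) ≤ ∑ i, v i ^ 2 := Finset.sum_nonneg fun i _ => sq_nonneg _
    have hPv : 0 ≤ v ⬝ᵥ (Pm *ᵥ v) := le_trans (by positivity) (hP2 v).1
    have h1 : c * (∑ i, v i ^ 2) ≤ v ⬝ᵥ ((Pm - M) *ᵥ v) := (hclo v).1
    have h2 : v ⬝ᵥ (Pm *ᵥ v) ≤ b * (∑ i, v i ^ 2) := (hP2 v).2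
    have hexp : v ⬝ᵥ ((Pm - M) *ᵥ v) = v ⬝ᵥ (Pm *ᵥ v) - v ⬝ᵥ (M *ᵥ v) := by
      rw [Matrix.sub_mulVec, dotProduct_sub]
    have step : v ⬝ᵥ (M *ᵥ v) ≤ (1 - c / b) * (v ⬝ᵥ (Pm *ᵥ v)) := by
      have h3 : c / b * (v ⬝ᵥ (Pm *ᵥ v)) ≤ c / b * (b * (∑ i, v i ^ 2)) :=
        mul_le_mul_of_nonneg_left h2 (by positivity)
      have h4 : c / b * (b * (∑ i, v i ^ 2)) = c * (∑ i, v i ^ 2) := by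
        field_simp
      nlinarith
    calc v ⬝ᵥ (M *ᵥ v) ≤ (1 - c / b) * (v ⬝ᵥ (Pm *ᵥ v)) := step
      _ ≤ max 0 (1 - c / b) * (v ⬝ᵥ (Pm *ᵥ v)) :=
        mul_le_mul_of_nonneg_right (le_max_right _ _) hPv

lemma exp_smul_transpose (s : ℝ) (A : Matrix (Fin n) (Fin n) ℝ) :
    exp (s • Aᵀ) = (exp (s • A))ᵀ := by
  rw [← Matrix.transpose_smul, Matrix.exp_transpose]

end Aux

/-- Theorem 1, Geromel–Colaneri minimum dwell-time.
If there exist symmetric positive definite matrices `P i` with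
`Aᵢᵀ Pᵢ + Pᵢ Aᵢ ≺ 0` and `exp(Aᵢᵀ T̄) Pⱼ exp(Aᵢ T̄) − Pᵢ ≺ 0` for `i ≠ j`,
then the switched system is globally asymptotically stable over all switching
sequences with minimum dwell-time `T̄`. -/
theorem min_dwell_time_stability
    (n N : ℕ) (hn : 1 ≤ n) (hN : 2 ≤ N)
    (A : Fin N → Matrix (Fin n) (Fin n) ℝ)
    (T : ℝ) (hT : 0 < T)
    (P : Fin N → Matrix (Fin n) (Fin n) ℝ)
    (hPsymm : ∀ i, (P i).IsSymm)
    (hPpos : ∀ i, (P i).PosDef)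
    (hcont : ∀ i, (-((A i)ᵀ * P i + P i * A i)).PosDef)
    (hdisc : ∀ i j, i ≠ j →
      (-(NormedSpace.exp (T • (A i)ᵀ) * P j * NormedSpace.exp (T • A i) - P i)).PosDef)
    -- a switching sequence with minimum dwell-time `T`
    (t : ℕ → ℝ) (ht0 : t 0 = 0) (htmono : StrictMono t)
    (htop : Tendsto t atTop atTop)
    (ι : ℕ → Fin N) (hι : ∀ k, ι (k + 1) ≠ ι k)
    (hdwell : ∀ k, T ≤ t (k + 1) - t k)
    -- the corresponding trajectory from `x0`
    (x0 : Fin n → ℝ) (x : ℝ → Fin n → ℝ)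
    (hx0 : x (t 0) = x0)
    (hx : ∀ k, ∀ s ∈ Set.Icc (t k) (t (k + 1)),
      x s = NormedSpace.exp ((s - t k) • A (ι k)) *ᵥ x (t k)) :
    Tendsto x atTop (𝓝 0) := by
  classical
  haveI : NeZero N := ⟨by omega⟩
  -- quadratic bounds for each P i
  choose a b hab hquad using fun i => quad_bounds hn (P i)
  have hapos : ∀ i, 0 < a i := fun i => (hab i (hPpos i)).1
  -- contraction factors
  have hcontr : ∀ i j : Fin N, ∃ ρ : ℝ, 0 ≤ ρ ∧ ρ < 1 ∧ (i ≠ j →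
      ∀ v, v ⬝ᵥ ((exp (T • (A i)ᵀ) * P j * exp (T • A i)) *ᵥ v)
        ≤ ρ * (v ⬝ᵥ (P i *ᵥ v))) := by
    intro i j
    by_cases hij : i ≠ j
    · have h := hdisc i j hij
      rw [neg_sub] at h
      obtain ⟨ρ, h0, h1, h2⟩ := quad_contraction hn (P i) _ (hPpos i) h
      exact ⟨ρ, h0, h1, fun _ => h2⟩
    · exact ⟨0, le_refl 0, one_pos, fun h => absurd h hij⟩
  choose ρ hρ0 hρ1 hρ using hcontr
  set ρm : ℝ := (Finset.univ : Finset (Fin N × Fin N)).sup' ⟨(0, 0), Finset.mem_univ _⟩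
    (fun p => ρ p.1 p.2) with hρm
  have hρm1 : ρm < 1 := by
    exact (Finset.sup'_lt_iff _).2 fun p _ => hρ1 p.1 p.2
  have hρmge : ∀ i j, ρ i j ≤ ρm := fun i j =>
    Finset.le_sup' (f := fun p : Fin N × Fin N => ρ p.1 p.2) (Finset.mem_univ (i, j))
  have hρm0 : 0 ≤ ρm := le_trans (hρ0 0 0) (hρmge 0 0)
  -- Lyapunov values at switching times
  set V : ℕ → ℝ := fun k => x (t k) ⬝ᵥ (P (ι k) *ᵥ x (t k)) with hV
  have hVnonneg : ∀ k, 0 ≤ V k := by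
    intro k
    have := (hquad (ι k) (x (t k))).1
    have h0 : (0:ℝ) ≤ a (ι k) * ∑ i, x (t k) i ^ 2 := by
      have := (hapos (ι k)).le
      have hs : (0:ℝ) ≤ ∑ i, x (t k) i ^ 2 := Finset.sum_nonneg fun i _ => sq_nonneg _
      positivity
    linarith
  have hstep : ∀ k, V (k + 1) ≤ ρm * V k := by
    intro k
    set i := ι k
    set j := ι (k + 1)
    have hij : i ≠ j := (hι k).symm
    set τ : ℝ := t (k + 1) - t k with hτdef
    have hτ : T ≤ τ := hdwell k
    have hIcc : t (k + 1) ∈ Set.Icc (t k) (t (k + 1)) :=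
      ⟨(htmono (Nat.lt_succ_self k)).le, le_refl _⟩
    have hxt : x (t (k + 1)) = exp (τ • A i) *ᵥ x (t k) := hx k (t (k + 1)) hIcc
    have hsplit : exp (τ • A i) = exp (T • A i) * exp ((τ - T) • A i) := by
      rw [← Matrix.exp_add_of_commute]
      · congr 1
        rw [← add_smul]; ring_nf
      · exact ((Commute.refl (A i)).smul_left T).smul_right (τ - T)
    set w : Fin n → ℝ := exp ((τ - T) • A i) *ᵥ x (t k) with hw
    have hxw : x (t (k + 1)) = exp (T • A i) *ᵥ w := by
      rw [hxt, hsplit, ← Matrix.mulVec_mulVec]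
    have hV1 : V (k + 1) = w ⬝ᵥ ((exp (T • (A i)ᵀ) * P j * exp (T • A i)) *ᵥ w) := by
      rw [hV]
      show x (t (k+1)) ⬝ᵥ (P j *ᵥ x (t (k+1))) = _
      rw [hxw, exp_smul_transpose, quad_conj]
    have h2 : w ⬝ᵥ ((exp (T • (A i)ᵀ) * P j * exp (T • A i)) *ᵥ w)
        ≤ ρ i j * (w ⬝ᵥ (P i *ᵥ w)) := hρ i j hij w
    have h3 : w ⬝ᵥ (P i *ᵥ w) ≤ x (t k) ⬝ᵥ (P i *ᵥ x (t k)) := by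
      rw [hw]
      exact quad_exp_le (A i) (P i) (hcont i).posSemidef (x (t k)) (by linarith)
    have hwP : 0 ≤ w ⬝ᵥ (P i *ᵥ w) := by
      have := (hquad i w).1
      have hs : (0:ℝ) ≤ ∑ l, w l ^ 2 := Finset.sum_nonneg fun l _ => sq_nonneg _
      nlinarith [(hapos i)]
    calc V (k + 1) = w ⬝ᵥ ((exp (T • (A i)ᵀ) * P j * exp (T • A i)) *ᵥ w) := hV1
      _ ≤ ρ i j * (w ⬝ᵥ (P i *ᵥ w)) := h2
      _ ≤ ρm * (w ⬝ᵥ (P i *ᵥ w)) := mul_le_mul_of_nonneg_right (hρmge i j) hwP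
      _ ≤ ρm * (x (t k) ⬝ᵥ (P i *ᵥ x (t k))) := mul_le_mul_of_nonneg_left h3 hρm0
      _ = ρm * V k := rfl
  have hVk : ∀ k, V k ≤ ρm ^ k * V 0 := by
    intro k
    induction k with
    | zero => simp
    | succ k ih =>
      calc V (k + 1) ≤ ρm * V k := hstep k
        _ ≤ ρm * (ρm ^ k * V 0) := mul_le_mul_of_nonneg_left ih hρm0
        _ = ρm ^ (k + 1) * V 0 := by ring
  -- uniform lower bound constant
  set am : ℝ := (Finset.univ : Finset (Fin N)).inf' ⟨0, Finset.mem_univ _⟩ a with ham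
  have hampos : 0 < am := by
    exact (Finset.lt_inf'_iff _).2 fun i _ => hapos i
  have hamle : ∀ i, am ≤ a i := fun i => Finset.inf'_le _ (Finset.mem_univ i)
  -- bound on each interval
  have hbound : ∀ k, ∀ s ∈ Set.Icc (t k) (t (k + 1)),
      am * (∑ i, x s i ^ 2) ≤ ρm ^ k * V 0 := by
    intro k s hs
    have hxs := hx k s hs
    have h1 : x s ⬝ᵥ (P (ι k) *ᵥ x s) ≤ V k := by
      rw [hxs]
      exact quad_exp_le (A (ι k)) (P (ι k)) (hcont (ι k)).posSemidef (x (t k))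
        (by linarith [hs.1])
    have h2 : a (ι k) * (∑ i, x s i ^ 2) ≤ x s ⬝ᵥ (P (ι k) *ᵥ x s) := (hquad (ι k) (x s)).1
    have hsum : (0:ℝ) ≤ ∑ i, x s i ^ 2 := Finset.sum_nonneg fun i _ => sq_nonneg _
    have h3 : am * (∑ i, x s i ^ 2) ≤ a (ι k) * (∑ i, x s i ^ 2) :=
      mul_le_mul_of_nonneg_right (hamle (ι k)) hsum
    linarith [hVk k]
  -- conclude
  rw [tendsto_pi_nhds]
  intro i
  rw [Metric.tendsto_atTop]
  intro ε hε
  have htend : Filter.Tendsto (fun k => ρm ^ k * V 0) Filter.atTop (nhds 0) := by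
    have := tendsto_pow_atTop_nhds_zero_of_lt_one hρm0 hρm1
    simpa using this.mul_const (V 0)
  have hev : ∀ᶠ k in Filter.atTop, ρm ^ k * V 0 < am * ε ^ 2 := by
    have hpos : (0:ℝ) < am * ε ^ 2 := by positivity
    exact htend.eventually_lt_const hpos
  obtain ⟨K, hK⟩ := hev.exists
  refine ⟨t K, fun s hs => ?_⟩
  -- locate s in a switching interval
  have hex : ∃ m, s < t m := by
    have := htop.eventually (Filter.eventually_gt_atTop s)
    exact this.exists
  have hsm : s < t (Nat.find hex) := Nat.find_spec hex
  have hm0 : Nat.find hex ≠ 0 := by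
    intro h
    have h00 : t 0 ≤ s := by
      calc t 0 ≤ t K := htmono.monotone (Nat.zero_le K)
        _ ≤ s := hs
    rw [h] at hsm
    linarith
  obtain ⟨k, hk⟩ : ∃ k, Nat.find hex = k + 1 :=
    ⟨Nat.find hex - 1, (Nat.succ_pred_eq_of_ne_zero hm0).symm⟩
  rw [hk] at hsm
  have htk : t k ≤ s := by
    by_contra h
    push_neg at h
    exact Nat.find_min hex (hk ▸ Nat.lt_succ_self k) h
  have hsIcc : s ∈ Set.Icc (t k) (t (k + 1)) := ⟨htk, hsm.le⟩
  have hkK : K ≤ k := by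
    by_contra h
    push_neg at h
    have : t (k + 1) ≤ t K := htmono.monotone h
    linarith
  have hb1 : am * (∑ l, x s l ^ 2) ≤ ρm ^ k * V 0 := hbound k s hsIcc
  have hpow : ρm ^ k * V 0 ≤ ρm ^ K * V 0 := by
    apply mul_le_mul_of_nonneg_right _ (hVnonneg 0)
    exact pow_le_pow_of_le_one hρm0 hρm1.le hkK
  have hsumlt : (∑ l, x s l ^ 2) < ε ^ 2 := by
    have h5 : am * (∑ l, x s l ^ 2) < am * ε ^ 2 := by linarith
    exact lt_of_mul_lt_mul_left h5 hampos.le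
  have hi2 : x s i ^ 2 < ε ^ 2 := by
    have : x s i ^ 2 ≤ ∑ l, x s l ^ 2 :=
      Finset.single_le_sum (fun l _ => sq_nonneg (x s l)) (Finset.mem_univ i)
    linarith
  have : |x s i| < ε := by
    nlinarith [sq_abs (x s i), abs_nonneg (x s i)]
  simpa [Real.dist_eq] using this
end

section
/- Let 0 < T_i^min < T_i^max < ∞ for each i ∈ {1,…,N}, and suppose there exist symmetric positive definite n×n matrices P_1, …, P_N such that exp(A_i^T T) P_i exp(A_i T) − P_j ≺ 0 for all i, j ∈ {1,…,N} with i ≠ j and all T ∈ [T_i^min, T_i^max]. Then the switched system ẋ = A_{σ(t)} x with mode-dependent dwell-times is globally asymptotically stable over the class of switching sequences satisfying t_{k+1} − t_k ∈ [T^min_{i_k}, T^max_{i_k}] for all k, where i_k is the mode active on [t_k, t_{k+1}]. -/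
open Matrix Filter Topology

section helpers

attribute [local instance] Matrix.linftyOpNormedAddCommGroup Matrix.linftyOpNormedSpace
  Matrix.linftyOpNormedRing Matrix.linftyOpNormedAlgebra

variable {n : ℕ}

private lemma quad_smul (P : Matrix (Fin n) (Fin n) ℝ) (c : ℝ) (y : Fin n → ℝ) :
    (c • y) ⬝ᵥ P *ᵥ (c • y) = c ^ 2 * (y ⬝ᵥ P *ᵥ y) := by
  rw [Matrix.mulVec_smul, smul_dotProduct, dotProduct_smul, smul_eq_mul, smul_eq_mul]
  ring

private lemma quad_pos (P : Matrix (Fin n) (Fin n) ℝ) (hP : P.PosDef)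
    {y : Fin n → ℝ} (hy : y ≠ 0) : 0 < y ⬝ᵥ P *ᵥ y := by
  simpa using hP.dotProduct_mulVec_pos hy

private lemma quad_nonneg (P : Matrix (Fin n) (Fin n) ℝ) (hP : P.PosDef)
    (y : Fin n → ℝ) : 0 ≤ y ⬝ᵥ P *ᵥ y := by
  rcases eq_or_ne y 0 with rfl | hy
  · simp
  · exact (quad_pos P hP hy).le

private lemma quad_cont (P : Matrix (Fin n) (Fin n) ℝ) :
    Continuous fun y : Fin n → ℝ => y ⬝ᵥ P *ᵥ y :=
  continuous_id.dotProduct (continuous_const.matrix_mulVec continuous_id)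

private lemma quad_lower (hn : 1 ≤ n) (P : Matrix (Fin n) (Fin n) ℝ) (hP : P.PosDef) :
    ∃ μ > 0, ∀ y : Fin n → ℝ, μ * ‖y‖ ^ 2 ≤ y ⬝ᵥ P *ᵥ y := by
  haveI : Nonempty (Fin n) := ⟨⟨0, hn⟩⟩
  have hne : (Metric.sphere (0 : Fin n → ℝ) 1).Nonempty :=
    NormedSpace.sphere_nonempty.mpr zero_le_one
  obtain ⟨u, hu, hmin⟩ := (isCompact_sphere (0 : Fin n → ℝ) 1).exists_isMinOn hne
    (quad_cont P).continuousOn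
  have hu1 : ‖u‖ = 1 := by simpa using hu
  have hu0 : u ≠ 0 := by
    intro h; rw [h, norm_zero] at hu1; norm_num at hu1
  refine ⟨u ⬝ᵥ P *ᵥ u, quad_pos P hP hu0, ?_⟩
  intro y
  rcases eq_or_ne y 0 with rfl | hy
  · simp
  · have hny : (0:ℝ) < ‖y‖ := norm_pos_iff.mpr hy
    set u' : Fin n → ℝ := ‖y‖⁻¹ • y with hu'
    have hu'mem : u' ∈ Metric.sphere (0 : Fin n → ℝ) 1 := by
      rw [mem_sphere_zero_iff_norm, hu', norm_smul, norm_inv, norm_norm]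
      field_simp
    have hyu : y = ‖y‖ • u' := by
      rw [hu', smul_smul, mul_inv_cancel₀ hny.ne', one_smul]
    have hmin' := hmin hu'mem
    calc (u ⬝ᵥ P *ᵥ u) * ‖y‖ ^ 2 ≤ (u' ⬝ᵥ P *ᵥ u') * ‖y‖ ^ 2 :=
          mul_le_mul_of_nonneg_right hmin' (by positivity)
      _ = ‖y‖⁻¹ ^ 2 * (y ⬝ᵥ P *ᵥ y) * ‖y‖ ^ 2 := by rw [hu', quad_smul]
      _ = y ⬝ᵥ P *ᵥ y := by field_simp

private lemma quad_upper (hn : 1 ≤ n) (P : Matrix (Fin n) (Fin n) ℝ) (hP : P.PosDef) :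
    ∃ L > 0, ∀ y : Fin n → ℝ, y ⬝ᵥ P *ᵥ y ≤ L * ‖y‖ ^ 2 := by
  haveI : Nonempty (Fin n) := ⟨⟨0, hn⟩⟩
  have hne : (Metric.sphere (0 : Fin n → ℝ) 1).Nonempty :=
    NormedSpace.sphere_nonempty.mpr zero_le_one
  obtain ⟨u, hu, hmax⟩ := (isCompact_sphere (0 : Fin n → ℝ) 1).exists_isMaxOn hne
    (quad_cont P).continuousOn
  have hu1 : ‖u‖ = 1 := by simpa using hu
  have hu0 : u ≠ 0 := by
    intro h; rw [h, norm_zero] at hu1; norm_num at hu1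
  refine ⟨u ⬝ᵥ P *ᵥ u, quad_pos P hP hu0, ?_⟩
  intro y
  rcases eq_or_ne y 0 with rfl | hy
  · simp
  · have hny : (0:ℝ) < ‖y‖ := norm_pos_iff.mpr hy
    set u' : Fin n → ℝ := ‖y‖⁻¹ • y with hu'
    have hu'mem : u' ∈ Metric.sphere (0 : Fin n → ℝ) 1 := by
      rw [mem_sphere_zero_iff_norm, hu', norm_smul, norm_inv, norm_norm]
      field_simp
    have hyu : y = ‖y‖ • u' := by
      rw [hu', smul_smul, mul_inv_cancel₀ hny.ne', one_smul]
    have hmax' := hmax hu'mem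
    calc y ⬝ᵥ P *ᵥ y = ‖y‖⁻¹ ^ 2 * (y ⬝ᵥ P *ᵥ y) * ‖y‖ ^ 2 := by field_simp
      _ = (u' ⬝ᵥ P *ᵥ u') * ‖y‖ ^ 2 := by rw [hu', quad_smul]
      _ ≤ (u ⬝ᵥ P *ᵥ u) * ‖y‖ ^ 2 :=
          mul_le_mul_of_nonneg_right hmax' (by positivity)

private lemma exp_cont (A : Matrix (Fin n) (Fin n) ℝ) :
    Continuous fun T : ℝ => NormedSpace.exp (T • A) :=
  NormedSpace.exp_continuous.comp (continuous_id.smul continuous_const)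

private lemma exp_norm_bound (A : Matrix (Fin n) (Fin n) ℝ) (b : ℝ) (hb : 0 ≤ b) :
    ∃ C > 0, ∀ T ∈ Set.Icc (0:ℝ) b, ∀ y : Fin n → ℝ,
      ‖NormedSpace.exp (T • A) *ᵥ y‖ ≤ C * ‖y‖ := by
  have hcont : Continuous fun T : ℝ => ‖NormedSpace.exp (T • A)‖ :=
    (exp_cont A).norm
  obtain ⟨T₀, hT₀, hmax⟩ := isCompact_Icc.exists_isMaxOn (Set.nonempty_Icc.mpr hb)
    hcont.continuousOn
  refine ⟨‖NormedSpace.exp (T₀ • A)‖ + 1, by positivity, ?_⟩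
  intro T hT y
  calc ‖NormedSpace.exp (T • A) *ᵥ y‖ ≤ ‖NormedSpace.exp (T • A)‖ * ‖y‖ :=
        Matrix.linfty_opNorm_mulVec _ _
    _ ≤ (‖NormedSpace.exp (T₀ • A)‖ + 1) * ‖y‖ := by
        have h2 : ‖NormedSpace.exp (T • A)‖ ≤ ‖NormedSpace.exp (T₀ • A)‖ := hmax hT
        have hy := norm_nonneg y
        nlinarith

private lemma pair_quad_identity (A Pi Pj : Matrix (Fin n) (Fin n) ℝ) (T : ℝ) (y : Fin n → ℝ) :
    y ⬝ᵥ (NormedSpace.exp (T • Aᵀ) * Pi * NormedSpace.exp (T • A)) *ᵥ y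
      = (NormedSpace.exp (T • A) *ᵥ y) ⬝ᵥ Pi *ᵥ (NormedSpace.exp (T • A) *ᵥ y) := by
  have h1 : (T • Aᵀ) = (T • A)ᵀ := (Matrix.transpose_smul T A).symm
  rw [h1, Matrix.exp_transpose]
  rw [← Matrix.mulVec_mulVec, ← Matrix.mulVec_mulVec, Matrix.dotProduct_mulVec,
    Matrix.vecMul_transpose]

private lemma pair_contraction (hn : 1 ≤ n) (A Pi Pj : Matrix (Fin n) (Fin n) ℝ)
    (hPj : Pj.PosDef) (a b : ℝ) (hab : a ≤ b)
    (hneg : ∀ T ∈ Set.Icc a b,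
      (-(NormedSpace.exp (T • Aᵀ) * Pi * NormedSpace.exp (T • A) - Pj)).PosDef) :
    ∃ ρ, 0 ≤ ρ ∧ ρ < 1 ∧ ∀ T ∈ Set.Icc a b, ∀ y : Fin n → ℝ,
      (NormedSpace.exp (T • A) *ᵥ y) ⬝ᵥ Pi *ᵥ (NormedSpace.exp (T • A) *ᵥ y)
        ≤ ρ * (y ⬝ᵥ Pj *ᵥ y) := by
  haveI : Nonempty (Fin n) := ⟨⟨0, hn⟩⟩
  set E : ℝ → Matrix (Fin n) (Fin n) ℝ := fun T => NormedSpace.exp (T • A) with hE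
  set F : ℝ × (Fin n → ℝ) → ℝ :=
    fun p => (E p.1 *ᵥ p.2) ⬝ᵥ Pi *ᵥ (E p.1 *ᵥ p.2) - p.2 ⬝ᵥ Pj *ᵥ p.2 with hF
  -- F is negative for y ≠ 0
  have hFneg : ∀ T ∈ Set.Icc a b, ∀ y : Fin n → ℝ, y ≠ 0 → F (T, y) < 0 := by
    intro T hT y hy
    have h1 := quad_pos _ (hneg T hT) hy
    rw [Matrix.neg_mulVec, Matrix.sub_mulVec, dotProduct_neg, dotProduct_sub,
      pair_quad_identity A Pi Pj T y] at h1
    simp only [hF, hE]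
    linarith
  -- continuity of F
  have hFcont : Continuous F := by
    have h1 : Continuous fun p : ℝ × (Fin n → ℝ) => E p.1 *ᵥ p.2 :=
      ((exp_cont A).comp continuous_fst).matrix_mulVec continuous_snd
    exact (h1.dotProduct (continuous_const.matrix_mulVec h1)).sub
      (continuous_snd.dotProduct (continuous_const.matrix_mulVec continuous_snd))
  -- compact maximization
  have hne : (Metric.sphere (0 : Fin n → ℝ) 1).Nonempty :=
    NormedSpace.sphere_nonempty.mpr zero_le_one
  obtain ⟨u₀, hu₀⟩ := hne
  have hK : IsCompact (Set.Icc a b ×ˢ Metric.sphere (0 : Fin n → ℝ) 1) :=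
    isCompact_Icc.prod (isCompact_sphere _ _)
  obtain ⟨⟨T₀, y₀⟩, hmem, hmax⟩ := hK.exists_isMaxOn
    ⟨(a, u₀), Set.mem_prod.mpr ⟨Set.left_mem_Icc.mpr hab, hu₀⟩⟩ hFcont.continuousOn
  obtain ⟨hT₀, hy₀⟩ := Set.mem_prod.mp hmem
  have hy₀1 : ‖y₀‖ = 1 := by simpa using hy₀
  have hy₀0 : y₀ ≠ 0 := by intro h; rw [h, norm_zero] at hy₀1; norm_num at hy₀1
  obtain ⟨δ, hδpos, hFbound⟩ : ∃ δ > 0, ∀ T ∈ Set.Icc a b, ∀ y : Fin n → ℝ,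
      F (T, y) ≤ -δ * ‖y‖ ^ 2 := by
    refine ⟨-F (T₀, y₀), by have := hFneg T₀ hT₀ y₀ hy₀0; linarith, ?_⟩
    intro T hT y
    rcases eq_or_ne y 0 with rfl | hy
    · simp [hF]
    · have hny : (0:ℝ) < ‖y‖ := norm_pos_iff.mpr hy
      set u' : Fin n → ℝ := ‖y‖⁻¹ • y with hu'
      have hu'mem : u' ∈ Metric.sphere (0 : Fin n → ℝ) 1 := by
        rw [mem_sphere_zero_iff_norm, hu', norm_smul, norm_inv, norm_norm]
        field_simp
      have hmax' : F (T, u') ≤ F (T₀, y₀) :=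
        hmax (Set.mem_prod.mpr ⟨hT, hu'mem⟩)
      have hhom : F (T, y) = ‖y‖ ^ 2 * F (T, u') := by
        simp only [hF, hu']
        rw [Matrix.mulVec_smul, quad_smul Pi, quad_smul Pj]
        field_simp
      rw [hhom]
      calc ‖y‖ ^ 2 * F (T, u') ≤ ‖y‖ ^ 2 * F (T₀, y₀) := by
            apply mul_le_mul_of_nonneg_left hmax' (by positivity)
        _ = -(-F (T₀, y₀)) * ‖y‖ ^ 2 := by ring
  -- upper bound for Q_j
  obtain ⟨L, hLpos, hL⟩ := quad_upper hn Pj hPj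
  refine ⟨max (1 - δ / L) 0, le_max_right _ _, ?_, ?_⟩
  · apply max_lt _ one_pos
    have : 0 < δ / L := div_pos hδpos hLpos
    linarith
  · intro T hT y
    have h1 := hFbound T hT y
    have h2 := hL y
    have h3 := quad_nonneg Pj hPj y
    have h4 : (NormedSpace.exp (T • A) *ᵥ y) ⬝ᵥ Pi *ᵥ (NormedSpace.exp (T • A) *ᵥ y)
        ≤ (1 - δ / L) * (y ⬝ᵥ Pj *ᵥ y) := by
      simp only [hF, hE] at h1
      have h5 : δ / L * (y ⬝ᵥ Pj *ᵥ y) ≤ δ * ‖y‖ ^ 2 := by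
        rw [div_mul_eq_mul_div, div_le_iff₀ hLpos]
        calc δ * (y ⬝ᵥ Pj *ᵥ y) ≤ δ * (L * ‖y‖ ^ 2) :=
              mul_le_mul_of_nonneg_left h2 hδpos.le
          _ = δ * ‖y‖ ^ 2 * L := by ring
      linarith
    calc (NormedSpace.exp (T • A) *ᵥ y) ⬝ᵥ Pi *ᵥ (NormedSpace.exp (T • A) *ᵥ y)
        ≤ (1 - δ / L) * (y ⬝ᵥ Pj *ᵥ y) := h4
      _ ≤ max (1 - δ / L) 0 * (y ⬝ᵥ Pj *ᵥ y) :=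
          mul_le_mul_of_nonneg_right (le_max_left _ _) h3

end helpers

/-- Theorem 2, mode-dependent dwell-times.
If there exist symmetric positive definite matrices `P i` with
`exp(Aᵢᵀ T) Pᵢ exp(Aᵢ T) − Pⱼ ≺ 0` for all `i ≠ j` and all
`T ∈ [Tᵢ^min, Tᵢ^max]`, then the switched system is globally asymptotically
stable over switching sequences with `t (k+1) − t k ∈ [T^min_{i_k}, T^max_{i_k}]`. -/
theorem mode_dependent_dwell_time_stability
    (n N : ℕ) (hn : 1 ≤ n) (hN : 2 ≤ N)
    (A : Fin N → Matrix (Fin n) (Fin n) ℝ)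
    (Tmin Tmax : Fin N → ℝ)
    (hTmin : ∀ i, 0 < Tmin i) (hTord : ∀ i, Tmin i < Tmax i)
    (P : Fin N → Matrix (Fin n) (Fin n) ℝ)
    (hPsymm : ∀ i, (P i).IsSymm)
    (hPpos : ∀ i, (P i).PosDef)
    (hdisc : ∀ i j, i ≠ j → ∀ T ∈ Set.Icc (Tmin i) (Tmax i),
      (-(NormedSpace.exp (T • (A i)ᵀ) * P i * NormedSpace.exp (T • A i) - P j)).PosDef)
    -- a switching sequence with mode-dependent dwell-times
    (t : ℕ → ℝ) (ht0 : t 0 = 0) (htmono : StrictMono t)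
    (htop : Tendsto t atTop atTop)
    (ι : ℕ → Fin N) (hι : ∀ k, ι (k + 1) ≠ ι k)
    (hdwell : ∀ k, t (k + 1) - t k ∈ Set.Icc (Tmin (ι k)) (Tmax (ι k)))
    -- the corresponding trajectory from `x0`
    (x0 : Fin n → ℝ) (x : ℝ → Fin n → ℝ)
    (hx0 : x (t 0) = x0)
    (hx : ∀ k, ∀ s ∈ Set.Icc (t k) (t (k + 1)),
      x s = NormedSpace.exp ((s - t k) • A (ι k)) *ᵥ x (t k)) :
    Tendsto x atTop (𝓝 0) := by
  haveI : Nonempty (Fin N) := ⟨⟨0, by omega⟩⟩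
  -- the quadratic Lyapunov functions
  set Q : Fin N → (Fin n → ℝ) → ℝ := fun i y => y ⬝ᵥ P i *ᵥ y with hQdef
  have hQnonneg : ∀ i y, 0 ≤ Q i y := fun i y => quad_nonneg (P i) (hPpos i) y
  -- per-pair contraction factors
  have hpair : ∀ i j : Fin N, ∃ ρ, 0 ≤ ρ ∧ ρ < 1 ∧ (i ≠ j →
      ∀ T ∈ Set.Icc (Tmin i) (Tmax i), ∀ y : Fin n → ℝ,
        Q i (NormedSpace.exp (T • A i) *ᵥ y) ≤ ρ * Q j y) := by
    intro i j
    rcases eq_or_ne i j with rfl | hij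
    · exact ⟨0, le_refl 0, one_pos, fun h => absurd rfl h⟩
    · obtain ⟨ρ, h0, h1, h2⟩ := pair_contraction hn (A i) (P i) (P j) (hPpos j)
        (Tmin i) (Tmax i) (hTord i).le (hdisc i j hij)
      exact ⟨ρ, h0, h1, fun _ => h2⟩
  choose ρf hρf0 hρf1 hρfprop using hpair
  set ρ : ℝ := Finset.univ.sup' Finset.univ_nonempty
    (fun p : Fin N × Fin N => ρf p.1 p.2) with hρdef
  have hρ1 : ρ < 1 := by
    rw [hρdef, Finset.sup'_lt_iff]
    exact fun p _ => hρf1 p.1 p.2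
  have hρle : ∀ i j, ρf i j ≤ ρ := fun i j =>
    Finset.le_sup' (f := fun p : Fin N × Fin N => ρf p.1 p.2) (Finset.mem_univ (i, j))
  have hρ0 : 0 ≤ ρ := le_trans (hρf0 (ι 0) (ι 0)) (hρle (ι 0) (ι 0))
  -- lower quadratic bounds
  have hμex : ∀ i : Fin N, ∃ μ > 0, ∀ y : Fin n → ℝ, μ * ‖y‖ ^ 2 ≤ Q i y :=
    fun i => quad_lower hn (P i) (hPpos i)
  choose μf hμf0 hμfle using hμex
  set μ : ℝ := Finset.univ.inf' Finset.univ_nonempty μf with hμdef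
  have hμ0 : 0 < μ := by
    rw [hμdef, Finset.lt_inf'_iff]
    exact fun i _ => hμf0 i
  have hμle : ∀ i y, μ * ‖y‖ ^ 2 ≤ Q i y := by
    intro i y
    refine le_trans ?_ (hμfle i y)
    apply mul_le_mul_of_nonneg_right (Finset.inf'_le _ (Finset.mem_univ i)) (by positivity)
  -- uniform bound on the flow inside one interval
  have hCex : ∀ i : Fin N, ∃ C > 0, ∀ T ∈ Set.Icc (0:ℝ) (Tmax i), ∀ y : Fin n → ℝ,
      ‖NormedSpace.exp (T • A i) *ᵥ y‖ ≤ C * ‖y‖ :=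
    fun i => exp_norm_bound (A i) (Tmax i) (le_of_lt ((hTmin i).trans (hTord i)))
  choose Cf hCf0 hCfle using hCex
  set C : ℝ := Finset.univ.sup' Finset.univ_nonempty Cf with hCdef
  have hC0 : 0 < C := lt_of_lt_of_le (hCf0 (ι 0)) (Finset.le_sup' _ (Finset.mem_univ (ι 0)))
  have hCle : ∀ i, ∀ T ∈ Set.Icc (0:ℝ) (Tmax i), ∀ y : Fin n → ℝ,
      ‖NormedSpace.exp (T • A i) *ᵥ y‖ ≤ C * ‖y‖ := by
    intro i T hT y
    refine le_trans (hCfle i T hT y) ?_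
    exact mul_le_mul_of_nonneg_right (Finset.le_sup' _ (Finset.mem_univ i)) (norm_nonneg y)
  -- the discrete Lyapunov sequence
  set e : ℕ → ℝ := fun k => Q (ι k) (x (t (k + 1))) with hedef
  have hxstep : ∀ k, x (t (k + 1)) =
      NormedSpace.exp ((t (k + 1) - t k) • A (ι k)) *ᵥ x (t k) :=
    fun k => hx k (t (k + 1)) ⟨(htmono (lt_add_one k)).le, le_refl _⟩
  have hdec : ∀ k, e (k + 1) ≤ ρ * e k := by
    intro k
    have h1 := hρfprop (ι (k + 1)) (ι k) (hι k)
      (t (k + 1 + 1) - t (k + 1)) (hdwell (k + 1)) (x (t (k + 1)))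
    calc e (k + 1) = Q (ι (k + 1)) (x (t (k + 1 + 1))) := rfl
      _ = Q (ι (k + 1))
            (NormedSpace.exp ((t (k + 1 + 1) - t (k + 1)) • A (ι (k + 1))) *ᵥ x (t (k + 1))) := by
          rw [hxstep (k + 1)]
      _ ≤ ρf (ι (k + 1)) (ι k) * Q (ι k) (x (t (k + 1))) := h1
      _ ≤ ρ * e k := mul_le_mul_of_nonneg_right (hρle _ _) (hQnonneg _ _)
  have hgeo : ∀ k, e k ≤ ρ ^ k * e 0 := by
    intro k
    induction k with
    | zero => simp
    | succ k ih =>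
      calc e (k + 1) ≤ ρ * e k := hdec k
        _ ≤ ρ * (ρ ^ k * e 0) := mul_le_mul_of_nonneg_left ih hρ0
        _ = ρ ^ (k + 1) * e 0 := by ring
  have hgeo0 : Tendsto (fun k => ρ ^ k * e 0) atTop (𝓝 0) := by
    have := (tendsto_pow_atTop_nhds_zero_of_lt_one hρ0 hρ1).mul_const (e 0)
    simpa using this
  have he0 : Tendsto e atTop (𝓝 0) :=
    tendsto_of_tendsto_of_tendsto_of_le_of_le tendsto_const_nhds hgeo0
      (fun k => hQnonneg _ _) hgeo
  -- conclude
  rw [NormedAddCommGroup.tendsto_nhds_zero]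
  intro ε hε
  have hε' : 0 < ε / C := div_pos hε hC0
  have hev : ∀ᶠ k in atTop, e k < μ * (ε / C) ^ 2 :=
    he0.eventually (gt_mem_nhds (by positivity))
  obtain ⟨K, hK⟩ := eventually_atTop.mp hev
  have hxk : ∀ k, K ≤ k → ‖x (t (k + 1))‖ < ε / C := by
    intro k hk
    have h2 : μ * ‖x (t (k + 1))‖ ^ 2 ≤ e k := hμle (ι k) (x (t (k + 1)))
    have h3 : μ * ‖x (t (k + 1))‖ ^ 2 < μ * (ε / C) ^ 2 := lt_of_le_of_lt h2 (hK k hk)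
    have h4 : ‖x (t (k + 1))‖ ^ 2 < (ε / C) ^ 2 := by
      exact lt_of_mul_lt_mul_left h3 hμ0.le
    nlinarith [norm_nonneg (x (t (k + 1)))]
  rw [eventually_atTop]
  refine ⟨t (K + 1), fun s hs => ?_⟩
  -- locate s in a switching interval
  have hex : ∃ m, s < t m := (htop.eventually_gt_atTop s).exists
  have hm := Nat.find_spec hex
  have hm0 : Nat.find hex ≠ 0 := by
    intro h
    rw [h] at hm
    have : t 0 ≤ t (K + 1) := htmono.monotone (Nat.zero_le _)
    linarith
  obtain ⟨k, hk⟩ := Nat.exists_eq_succ_of_ne_zero hm0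
  have hks : t k ≤ s := by
    by_contra h
    exact Nat.find_min hex (by omega) (lt_of_not_ge h)
  have hsk1 : s < t (k + 1) := by have h6 := hm; rw [hk] at h6; exact h6
  have hkK : K + 1 ≤ k := by
    have h1 : t (K + 1) < t (k + 1) := lt_of_le_of_lt hs hsk1
    have := htmono.lt_iff_lt.mp h1
    omega
  obtain ⟨j, hj, hjK⟩ : ∃ j, k = j + 1 ∧ K ≤ j := ⟨k - 1, by omega, by omega⟩
  -- bound ‖x s‖
  have hform := hx k s ⟨hks, hsk1.le⟩
  have hTmem : s - t k ∈ Set.Icc (0:ℝ) (Tmax (ι k)) := by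
    constructor
    · linarith
    · have h5 := (hdwell k).2
      linarith
  have hbound : ‖x s‖ ≤ C * ‖x (t k)‖ := by
    rw [hform]
    exact hCle (ι k) (s - t k) hTmem (x (t k))
  have hxtk : ‖x (t k)‖ < ε / C := by
    rw [hj]
    exact hxk j hjK
  calc ‖x s‖ ≤ C * ‖x (t k)‖ := hbound
    _ < C * (ε / C) := by exact (mul_lt_mul_iff_right₀ hC0).mpr hxtk
    _ = ε := by field_simp
end

section
/- Let S ⊆ {1,…,N} and let 0 < T_i^min for all i, with T_i^max < ∞ finite for i ∉ S. Suppose there exist symmetric positive definite n×n matrices P_1, …, P_N such that: (i) for every i ∈ S, A_i^T P_i + P_i A_i ≺ 0 and exp(A_i^T T_i^min) P_i exp(A_i T_i^min) − P_j ≺ 0 for all j ≠ i; and (ii) for every i ∉ S, exp(A_i^T T) P_i exp(A_i T) − P_j ≺ 0 for all j ≠ i and all T ∈ [T_i^min, T_i^max]. Then the switched system ẋ = A_{σ(t)} x is globally asymptotically stable over the class of switching sequences in which each dwell-time t_{k+1} − t_k lies in [T^min_{i_k}, ∞) when i_k ∈ S and in [T^min_{i_k}, T^max_{i_k}] when i_k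 ∉ S. -/
open Matrix Filter Topology
open NormedSpace

/-! ### Auxiliary lemmas -/

section Aux

variable {n : ℕ}

theorem my_qf_conj (B M : Matrix (Fin n) (Fin n) ℝ) (v : Fin n → ℝ) :
    (B *ᵥ v) ⬝ᵥ M *ᵥ (B *ᵥ v) = v ⬝ᵥ (Bᵀ * M * B) *ᵥ v := by
  rw [dotProduct_mulVec (B *ᵥ v) M, ← vecMul_transpose, vecMul_vecMul,
    ← dotProduct_mulVec, vecMul_transpose, mulVec_mulVec, Matrix.mul_assoc]

theorem my_qf_smul (M : Matrix (Fin n) (Fin n) ℝ) (c : ℝ) (v : Fin n → ℝ) :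
    (c • v) ⬝ᵥ M *ᵥ (c • v) = c ^ 2 * (v ⬝ᵥ M *ᵥ v) := by
  rw [mulVec_smul, smul_dotProduct, dotProduct_smul, smul_eq_mul, smul_eq_mul]
  ring

theorem my_qf_nonneg {M : Matrix (Fin n) (Fin n) ℝ} (hM : M.PosSemidef) (v : Fin n → ℝ) :
    0 ≤ v ⬝ᵥ M *ᵥ v := by simpa using hM.dotProduct_mulVec_nonneg v

theorem my_qf_pos {M : Matrix (Fin n) (Fin n) ℝ} (hM : M.PosDef) {v : Fin n → ℝ} (hv : v ≠ 0) :
    0 < v ⬝ᵥ M *ᵥ v := by simpa using hM.dotProduct_mulVec_pos hv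

theorem my_sub_qf (X Pj : Matrix (Fin n) (Fin n) ℝ) (v : Fin n → ℝ) :
    v ⬝ᵥ (-(X - Pj)) *ᵥ v = v ⬝ᵥ Pj *ᵥ v - v ⬝ᵥ X *ᵥ v := by
  rw [Matrix.neg_mulVec, dotProduct_neg, Matrix.sub_mulVec, dotProduct_sub]
  ring

theorem my_exp_smul_transpose (A : Matrix (Fin n) (Fin n) ℝ) (c : ℝ) :
    exp (c • Aᵀ) = (exp (c • A))ᵀ := by
  rw [← Matrix.transpose_smul, Matrix.exp_transpose]

theorem my_unif_lower (hn : 1 ≤ n) (K : Set ℝ) (hK : IsCompact K)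
    (F : ℝ → Matrix (Fin n) (Fin n) ℝ) (hF : Continuous F)
    (hpos : ∀ T ∈ K, (F T).PosDef) :
    ∃ c > 0, ∀ T ∈ K, ∀ v : Fin n → ℝ, c * ‖v‖ ^ 2 ≤ v ⬝ᵥ (F T) *ᵥ v := by
  haveI : Nonempty (Fin n) := ⟨⟨0, hn⟩⟩
  rcases K.eq_empty_or_nonempty with hKe | hKne
  · exact ⟨1, one_pos, by simp [hKe]⟩
  have hsne : (Metric.sphere (0 : Fin n → ℝ) 1).Nonempty :=
    NormedSpace.sphere_nonempty.2 zero_le_one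
  have hcomp : IsCompact (K ×ˢ Metric.sphere (0 : Fin n → ℝ) 1) :=
    hK.prod (isCompact_sphere 0 1)
  have hcont : Continuous (fun p : ℝ × (Fin n → ℝ) => p.2 ⬝ᵥ (F p.1) *ᵥ p.2) :=
    (continuous_snd).dotProduct ((hF.comp continuous_fst).matrix_mulVec continuous_snd)
  obtain ⟨p₀, hp₀, hmin'⟩ := hcomp.exists_isMinOn (hKne.prod hsne) hcont.continuousOn
  have hmin := isMinOn_iff.1 hmin'
  obtain ⟨hT₀, hu₀⟩ := Set.mem_prod.1 hp₀
  have hu₀ne : p₀.2 ≠ 0 := by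
    intro h
    have := Metric.mem_sphere.1 hu₀
    rw [h] at this; simp at this
  refine ⟨p₀.2 ⬝ᵥ (F p₀.1) *ᵥ p₀.2, my_qf_pos (hpos _ hT₀) hu₀ne, ?_⟩
  intro T hT v
  rw [mul_comm]
  rcases eq_or_ne v 0 with rfl | hv
  · simp
  · have hnv : ‖v‖ ≠ 0 := norm_ne_zero_iff.2 hv
    set u : Fin n → ℝ := ‖v‖⁻¹ • v with hu
    have husph : u ∈ Metric.sphere (0 : Fin n → ℝ) 1 := by
      simp [hu, norm_smul, inv_mul_cancel₀ hnv]
    have hvu : v = ‖v‖ • u := by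
      rw [hu, smul_smul, mul_inv_cancel₀ hnv, one_smul]
    have hq : v ⬝ᵥ (F T) *ᵥ v = ‖v‖ ^ 2 * (u ⬝ᵥ (F T) *ᵥ u) := by
      conv_lhs => rw [hvu]
      rw [my_qf_smul]
    rw [hq]
    exact mul_le_mul_of_nonneg_left (hmin (T, u) (Set.mem_prod.2 ⟨hT, husph⟩)) (sq_nonneg _)

theorem my_qf_upper (hn : 1 ≤ n) (M : Matrix (Fin n) (Fin n) ℝ) :
    ∃ C > 0, ∀ v : Fin n → ℝ, v ⬝ᵥ M *ᵥ v ≤ C * ‖v‖ ^ 2 := by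
  haveI : Nonempty (Fin n) := ⟨⟨0, hn⟩⟩
  have hsne : (Metric.sphere (0 : Fin n → ℝ) 1).Nonempty :=
    NormedSpace.sphere_nonempty.2 zero_le_one
  have hcont : Continuous (fun v : Fin n → ℝ => v ⬝ᵥ M *ᵥ v) :=
    continuous_id.dotProduct (continuous_const.matrix_mulVec continuous_id)
  obtain ⟨u₀, hu₀, hmax'⟩ :=
    (isCompact_sphere (0 : Fin n → ℝ) 1).exists_isMaxOn hsne hcont.continuousOn
  have hmax := isMaxOn_iff.1 hmax'
  set C := max (u₀ ⬝ᵥ M *ᵥ u₀) 1 with hC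
  refine ⟨C, lt_of_lt_of_le one_pos (le_max_right _ _), ?_⟩
  intro v
  rcases eq_or_ne v 0 with rfl | hv
  · simp
  · have hnv : ‖v‖ ≠ 0 := norm_ne_zero_iff.2 hv
    set u : Fin n → ℝ := ‖v‖⁻¹ • v with hu
    have husph : u ∈ Metric.sphere (0 : Fin n → ℝ) 1 := by
      simp [hu, norm_smul, inv_mul_cancel₀ hnv]
    have hvu : v = ‖v‖ • u := by rw [hu, smul_smul, mul_inv_cancel₀ hnv, one_smul]
    have hq : v ⬝ᵥ M *ᵥ v = ‖v‖ ^ 2 * (u ⬝ᵥ M *ᵥ u) := by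
      conv_lhs => rw [hvu]
      rw [my_qf_smul]
    rw [hq, mul_comm C _]
    refine mul_le_mul_of_nonneg_left ?_ (sq_nonneg _)
    exact le_trans (hmax u husph) (le_max_left _ _)

section WithNorm

attribute [local instance] Matrix.linftyOpNormedRing Matrix.linftyOpNormedAlgebra

noncomputable def myMulVecCLM (v : Fin n → ℝ) : Matrix (Fin n) (Fin n) ℝ →L[ℝ] (Fin n → ℝ) :=
  LinearMap.toContinuousLinearMap
    { toFun := fun M => M *ᵥ v
      map_add' := fun M N => Matrix.add_mulVec M N v
      map_smul' := fun c M => Matrix.smul_mulVec c M v }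

theorem my_hasDerivAt_flow (A : Matrix (Fin n) (Fin n) ℝ) (v : Fin n → ℝ) (s : ℝ) :
    HasDerivAt (fun u : ℝ => exp (u • A) *ᵥ v) (A *ᵥ (exp (s • A) *ᵥ v)) s := by
  have h1 : HasDerivAt (fun u : ℝ => exp (u • A)) (A * exp (s • A)) s :=
    hasDerivAt_exp_smul_const' A s
  have h2 := ((myMulVecCLM v).hasFDerivAt.comp_hasDerivAt s h1)
  have h3 : A *ᵥ (exp (s • A) *ᵥ v) = myMulVecCLM v (A * exp (s • A)) := by
    rw [Matrix.mulVec_mulVec]; rfl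
  rw [h3]; exact h2

theorem my_hasDerivAt_qf (A P : Matrix (Fin n) (Fin n) ℝ) (v : Fin n → ℝ) (s : ℝ) :
    HasDerivAt (fun u : ℝ => (exp (u • A) *ᵥ v) ⬝ᵥ P *ᵥ (exp (u • A) *ᵥ v))
      ((exp (s • A) *ᵥ v) ⬝ᵥ ((Aᵀ * P + P * A) *ᵥ (exp (s • A) *ᵥ v))) s := by
  set w := fun u : ℝ => exp (u • A) *ᵥ v with hw
  have hu : ∀ i, HasDerivAt (fun u : ℝ => w u i) ((A *ᵥ w s) i) s := by
    intro i
    exact hasDerivAt_pi.1 (my_hasDerivAt_flow A v s) i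
  have hmain : HasDerivAt (fun u : ℝ => ∑ i, w u i * ∑ j, P i j * w u j)
      (∑ i, ((A *ᵥ w s) i * ∑ j, P i j * w s j + w s i * ∑ j, P i j * (A *ᵥ w s) j)) s := by
    apply HasDerivAt.fun_sum
    intro i _
    exact (hu i).mul (HasDerivAt.fun_sum fun j _ => (hu j).const_mul (P i j))
  have heq : (fun u : ℝ => (w u) ⬝ᵥ P *ᵥ (w u))
      = fun u : ℝ => ∑ i, w u i * ∑ j, P i j * w u j := by
    funext u; simp [dotProduct, mulVec]
  rw [heq]
  convert hmain using 1
  have e1 : (A *ᵥ w s) ⬝ᵥ P *ᵥ w s = w s ⬝ᵥ (Aᵀ * P) *ᵥ w s := by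
    rw [dotProduct_mulVec (A *ᵥ w s), ← vecMul_transpose, vecMul_vecMul, ← dotProduct_mulVec]
  have e2 : w s ⬝ᵥ P *ᵥ (A *ᵥ w s) = w s ⬝ᵥ (P * A) *ᵥ w s := by
    rw [mulVec_mulVec]
  calc w s ⬝ᵥ (Aᵀ * P + P * A) *ᵥ w s
      = (A *ᵥ w s) ⬝ᵥ P *ᵥ w s + w s ⬝ᵥ P *ᵥ (A *ᵥ w s) := by
        rw [e1, e2, Matrix.add_mulVec, dotProduct_add]
    _ = ∑ i, ((A *ᵥ w s) i * ∑ j, P i j * w s j + w s i * ∑ j, P i j * (A *ᵥ w s) j) := by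
        rw [Finset.sum_add_distrib]; simp [dotProduct, mulVec]

theorem my_lyap_antitone (A P : Matrix (Fin n) (Fin n) ℝ)
    (h : (-(Aᵀ * P + P * A)).PosSemidef) (v : Fin n → ℝ) :
    Antitone (fun u : ℝ => (exp (u • A) *ᵥ v) ⬝ᵥ P *ᵥ (exp (u • A) *ᵥ v)) := by
  apply antitone_of_deriv_nonpos
  · exact fun s => (my_hasDerivAt_qf A P v s).differentiableAt
  · intro s
    rw [(my_hasDerivAt_qf A P v s).deriv]
    set w := exp (s • A) *ᵥ v
    have := my_qf_nonneg h w
    rw [Matrix.neg_mulVec, dotProduct_neg] at this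
    linarith

theorem my_flow_bound (A : Matrix (Fin n) (Fin n) ℝ) (hn : 1 ≤ n) (a b : ℝ) :
    ∃ C > 0, ∀ T ∈ Set.Icc a b, ∀ v : Fin n → ℝ,
      ‖exp (T • A) *ᵥ v‖ ≤ C * ‖v‖ := by
  haveI : Nonempty (Fin n) := ⟨⟨0, hn⟩⟩
  rcases (Set.Icc a b).eq_empty_or_nonempty with hKe | hKne
  · exact ⟨1, one_pos, by simp [hKe]⟩
  have hsne : (Metric.sphere (0 : Fin n → ℝ) 1).Nonempty :=
    NormedSpace.sphere_nonempty.2 zero_le_one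
  have hcomp : IsCompact ((Set.Icc a b) ×ˢ Metric.sphere (0 : Fin n → ℝ) 1) :=
    isCompact_Icc.prod (isCompact_sphere 0 1)
  have hE : Continuous (fun T : ℝ => exp (T • A)) :=
    exp_continuous.comp (continuous_id.smul continuous_const)
  have hcont : Continuous (fun p : ℝ × (Fin n → ℝ) => ‖exp (p.1 • A) *ᵥ p.2‖) :=
    ((hE.comp continuous_fst).matrix_mulVec continuous_snd).norm
  obtain ⟨p₀, hp₀, hmax'⟩ := hcomp.exists_isMaxOn (hKne.prod hsne) hcont.continuousOn
  have hmax := isMaxOn_iff.1 hmax'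
  set C := max ‖exp (p₀.1 • A) *ᵥ p₀.2‖ 1 with hC
  refine ⟨C, lt_of_lt_of_le one_pos (le_max_right _ _), ?_⟩
  intro T hT v
  rcases eq_or_ne v 0 with rfl | hv
  · simp
  · have hnv : ‖v‖ ≠ 0 := norm_ne_zero_iff.2 hv
    set u : Fin n → ℝ := ‖v‖⁻¹ • v with hu
    have husph : u ∈ Metric.sphere (0 : Fin n → ℝ) 1 := by
      simp [hu, norm_smul, inv_mul_cancel₀ hnv]
    have hvu : v = ‖v‖ • u := by rw [hu, smul_smul, mul_inv_cancel₀ hnv, one_smul]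
    have hq : ‖exp (T • A) *ᵥ v‖ = ‖v‖ * ‖exp (T • A) *ᵥ u‖ := by
      conv_lhs => rw [hvu]
      rw [mulVec_smul, norm_smul, Real.norm_eq_abs, abs_norm]
    rw [hq, mul_comm C _]
    refine mul_le_mul_of_nonneg_left ?_ (norm_nonneg _)
    exact le_trans (hmax (T, u) (Set.mem_prod.2 ⟨hT, husph⟩)) (le_max_left _ _)

theorem my_contract_S (hn : 1 ≤ n) (Ai Pi Pj : Matrix (Fin n) (Fin n) ℝ) (Tm : ℝ)
    (hcont : (-(Aiᵀ * Pi + Pi * Ai)).PosSemidef)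
    (hdisc : (-(exp (Tm • Aiᵀ) * Pi * exp (Tm • Ai) - Pj)).PosDef) :
    ∃ μ, 0 ≤ μ ∧ μ < 1 ∧ ∀ T, Tm ≤ T → ∀ v : Fin n → ℝ,
      (exp (T • Ai) *ᵥ v) ⬝ᵥ Pi *ᵥ (exp (T • Ai) *ᵥ v) ≤ μ * (v ⬝ᵥ Pj *ᵥ v) := by
  obtain ⟨Λ, hΛ, hup⟩ := my_qf_upper hn Pj
  obtain ⟨δ₀, hδ₀, hlow⟩ := my_unif_lower hn (Set.Icc Tm Tm) isCompact_Icc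
    (fun _ => -(exp (Tm • Aiᵀ) * Pi * exp (Tm • Ai) - Pj)) continuous_const
    (fun _ _ => hdisc)
  have hlow' := fun v => hlow Tm (Set.mem_Icc.2 ⟨le_rfl, le_rfl⟩) v
  set δ := min δ₀ Λ with hδdef
  have hδ : 0 < δ := lt_min hδ₀ hΛ
  have hδΛ : δ ≤ Λ := min_le_right _ _
  refine ⟨1 - δ / Λ, by rw [sub_nonneg]; exact div_le_one_of_le₀ hδΛ hΛ.le,
    by simp only [sub_lt_self_iff]; positivity, ?_⟩
  intro T hT v
  have h1 : (exp (T • Ai) *ᵥ v) ⬝ᵥ Pi *ᵥ (exp (T • Ai) *ᵥ v)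
      ≤ (exp (Tm • Ai) *ᵥ v) ⬝ᵥ Pi *ᵥ (exp (Tm • Ai) *ᵥ v) :=
    my_lyap_antitone Ai Pi hcont v hT
  have h2 : (exp (Tm • Ai) *ᵥ v) ⬝ᵥ Pi *ᵥ (exp (Tm • Ai) *ᵥ v)
      = v ⬝ᵥ (exp (Tm • Aiᵀ) * Pi * exp (Tm • Ai)) *ᵥ v := by
    rw [my_qf_conj, my_exp_smul_transpose]
  have h3 := hlow' v
  rw [my_sub_qf] at h3
  have h4 : v ⬝ᵥ Pj *ᵥ v ≤ Λ * ‖v‖ ^ 2 := hup v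
  have hr : (δ / Λ) * Λ = δ := div_mul_cancel₀ δ (ne_of_gt hΛ)
  have hr0 : 0 ≤ δ / Λ := by positivity
  have h5 : (δ / Λ) * (v ⬝ᵥ Pj *ᵥ v) ≤ δ * ‖v‖ ^ 2 := by
    calc (δ / Λ) * (v ⬝ᵥ Pj *ᵥ v) ≤ (δ / Λ) * (Λ * ‖v‖ ^ 2) :=
          mul_le_mul_of_nonneg_left h4 hr0
      _ = δ * ‖v‖ ^ 2 := by rw [← mul_assoc, hr]
  have h6 : δ₀ * ‖v‖ ^ 2 ≥ δ * ‖v‖ ^ 2 :=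
    mul_le_mul_of_nonneg_right (min_le_left _ _) (sq_nonneg _)
  nlinarith [h1, h2, h3, h5, h6]

theorem my_contract_notS (hn : 1 ≤ n) (Ai Pi Pj : Matrix (Fin n) (Fin n) ℝ) (Tm TM : ℝ)
    (hdisc : ∀ T ∈ Set.Icc Tm TM,
      (-(exp (T • Aiᵀ) * Pi * exp (T • Ai) - Pj)).PosDef) :
    ∃ μ, 0 ≤ μ ∧ μ < 1 ∧ ∀ T ∈ Set.Icc Tm TM, ∀ v : Fin n → ℝ,
      (exp (T • Ai) *ᵥ v) ⬝ᵥ Pi *ᵥ (exp (T • Ai) *ᵥ v) ≤ μ * (v ⬝ᵥ Pj *ᵥ v) := by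
  obtain ⟨Λ, hΛ, hup⟩ := my_qf_upper hn Pj
  have hE : Continuous (fun T : ℝ => exp (T • Ai)) :=
    exp_continuous.comp (continuous_id.smul continuous_const)
  have hE' : Continuous (fun T : ℝ => exp (T • Aiᵀ)) :=
    exp_continuous.comp (continuous_id.smul continuous_const)
  have hF : Continuous (fun T : ℝ => -(exp (T • Aiᵀ) * Pi * exp (T • Ai) - Pj)) :=
    (((hE'.matrix_mul continuous_const).matrix_mul hE).sub continuous_const).neg
  obtain ⟨δ₀, hδ₀, hlow⟩ := my_unif_lower hn (Set.Icc Tm TM) isCompact_Icc _ hF hdisc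
  set δ := min δ₀ Λ with hδdef
  have hδ : 0 < δ := lt_min hδ₀ hΛ
  have hδΛ : δ ≤ Λ := min_le_right _ _
  refine ⟨1 - δ / Λ, by rw [sub_nonneg]; exact div_le_one_of_le₀ hδΛ hΛ.le,
    by simp only [sub_lt_self_iff]; positivity, ?_⟩
  intro T hT v
  have h2 : (exp (T • Ai) *ᵥ v) ⬝ᵥ Pi *ᵥ (exp (T • Ai) *ᵥ v)
      = v ⬝ᵥ (exp (T • Aiᵀ) * Pi * exp (T • Ai)) *ᵥ v := by
    rw [my_qf_conj, my_exp_smul_transpose]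
  have h3 := hlow T hT v
  rw [my_sub_qf] at h3
  have h4 : v ⬝ᵥ Pj *ᵥ v ≤ Λ * ‖v‖ ^ 2 := hup v
  have hr : (δ / Λ) * Λ = δ := div_mul_cancel₀ δ (ne_of_gt hΛ)
  have hr0 : 0 ≤ δ / Λ := by positivity
  have h5 : (δ / Λ) * (v ⬝ᵥ Pj *ᵥ v) ≤ δ * ‖v‖ ^ 2 := by
    calc (δ / Λ) * (v ⬝ᵥ Pj *ᵥ v) ≤ (δ / Λ) * (Λ * ‖v‖ ^ 2) :=
          mul_le_mul_of_nonneg_left h4 hr0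
      _ = δ * ‖v‖ ^ 2 := by rw [← mul_assoc, hr]
  have h6 : δ₀ * ‖v‖ ^ 2 ≥ δ * ‖v‖ ^ 2 :=
    mul_le_mul_of_nonneg_right (min_le_left _ _) (sq_nonneg _)
  nlinarith [h2, h3, h5, h6]

end WithNorm

end Aux
/-- Theorem 2 together with Remark 1: some modes with unbounded
dwell-times. For modes `i ∈ S` the dwell-time lies in `[Tᵢ^min, ∞)` and the
conditions are `Aᵢᵀ Pᵢ + Pᵢ Aᵢ ≺ 0` plus the discrete condition at `Tᵢ^min`;
for modes `i ∉ S` the dwell-time lies in `[Tᵢ^min, Tᵢ^max]` and the discrete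
condition is required for all `T` in that interval. The switched system is then
globally asymptotically stable over that class of switching sequences. -/
theorem mixed_dwell_time_stability
    (n N : ℕ) (hn : 1 ≤ n) (hN : 2 ≤ N)
    (A : Fin N → Matrix (Fin n) (Fin n) ℝ)
    (S : Set (Fin N))
    (Tmin Tmax : Fin N → ℝ)
    (hTmin : ∀ i, 0 < Tmin i)
    (hTord : ∀ i, i ∉ S → Tmin i < Tmax i)
    (P : Fin N → Matrix (Fin n) (Fin n) ℝ)
    (hPsymm : ∀ i, (P i).IsSymm)
    (hPpos : ∀ i, (P i).PosDef)
    -- conditions for the modes with unbounded dwell-time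
    (hcontS : ∀ i ∈ S, (-((A i)ᵀ * P i + P i * A i)).PosDef)
    (hdiscS : ∀ i ∈ S, ∀ j, j ≠ i →
      (-(NormedSpace.exp (Tmin i • (A i)ᵀ) * P i * NormedSpace.exp (Tmin i • A i)
        - P j)).PosDef)
    -- conditions for the modes with bounded dwell-time
    (hdisc : ∀ i, i ∉ S → ∀ j, j ≠ i → ∀ T ∈ Set.Icc (Tmin i) (Tmax i),
      (-(NormedSpace.exp (T • (A i)ᵀ) * P i * NormedSpace.exp (T • A i) - P j)).PosDef)
    -- a switching sequence respecting the mode-dependent dwell-time ranges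
    (t : ℕ → ℝ) (ht0 : t 0 = 0) (htmono : StrictMono t)
    (htop : Tendsto t atTop atTop)
    (ι : ℕ → Fin N) (hι : ∀ k, ι (k + 1) ≠ ι k)
    (hdwellS : ∀ k, ι k ∈ S → Tmin (ι k) ≤ t (k + 1) - t k)
    (hdwell : ∀ k, ι k ∉ S → t (k + 1) - t k ∈ Set.Icc (Tmin (ι k)) (Tmax (ι k)))
    -- the corresponding trajectory from `x0`
    (x0 : Fin n → ℝ) (x : ℝ → Fin n → ℝ)
    (hx0 : x (t 0) = x0)
    (hx : ∀ k, ∀ s ∈ Set.Icc (t k) (t (k + 1)),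
      x s = NormedSpace.exp ((s - t k) • A (ι k)) *ᵥ x (t k)) :
    Tendsto x atTop (𝓝 0) := by
  haveI : Nonempty (Fin N) := ⟨⟨0, by omega⟩⟩
  -- the step map
  have hstep : ∀ k, x (t (k + 1)) = exp ((t (k + 1) - t k) • A (ι k)) *ᵥ x (t k) := fun k =>
    hx k (t (k + 1)) ⟨(htmono (Nat.lt_succ_self k)).le, le_rfl⟩
  -- dwell-time condition in disjunctive form
  have hdc : ∀ k, (ι k ∈ S ∧ Tmin (ι k) ≤ t (k + 1) - t k) ∨
      (ι k ∉ S ∧ (t (k + 1) - t k) ∈ Set.Icc (Tmin (ι k)) (Tmax (ι k))) := by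
    intro k
    by_cases h : ι k ∈ S
    · exact Or.inl ⟨h, hdwellS k h⟩
    · exact Or.inr ⟨h, hdwell k h⟩
  -- pairwise contraction factors
  have hpair : ∀ p : Fin N × Fin N, ∃ μ, 0 ≤ μ ∧ μ < 1 ∧ (p.2 ≠ p.1 → ∀ T,
      ((p.1 ∈ S ∧ Tmin p.1 ≤ T) ∨ (p.1 ∉ S ∧ T ∈ Set.Icc (Tmin p.1) (Tmax p.1))) →
      ∀ v : Fin n → ℝ,
      (exp (T • A p.1) *ᵥ v) ⬝ᵥ P p.1 *ᵥ (exp (T • A p.1) *ᵥ v)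
        ≤ μ * (v ⬝ᵥ P p.2 *ᵥ v)) := by
    rintro ⟨i, j⟩
    by_cases hji : j = i
    · exact ⟨0, le_rfl, one_pos, fun h => absurd hji h⟩
    by_cases hiS : i ∈ S
    · obtain ⟨μ, h0, h1, hμ⟩ := my_contract_S hn (A i) (P i) (P j) (Tmin i)
        (hcontS i hiS).posSemidef (hdiscS i hiS j hji)
      refine ⟨μ, h0, h1, fun _ T hT v => ?_⟩
      rcases hT with ⟨_, hT⟩ | ⟨hiS', _⟩
      · exact hμ T hT v
      · exact absurd hiS hiS'
    · obtain ⟨μ, h0, h1, hμ⟩ := my_contract_notS hn (A i) (P i) (P j) (Tmin i) (Tmax i)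
        (fun T hT => hdisc i hiS j hji T hT)
      refine ⟨μ, h0, h1, fun _ T hT v => ?_⟩
      rcases hT with ⟨hiS', _⟩ | ⟨_, hT⟩
      · exact absurd hiS' hiS
      · exact hμ T hT v
  choose μf hμ0 hμ1 hμΦ using hpair
  set μ : ℝ := Finset.univ.sup' Finset.univ_nonempty μf with hμdef
  obtain ⟨p⟩ := (inferInstance : Nonempty (Fin N × Fin N))
  have hμ0' : 0 ≤ μ := le_trans (hμ0 p) (Finset.le_sup' μf (Finset.mem_univ p))
  have hμ1' : μ < 1 := (Finset.sup'_lt_iff _).2 fun q _ => hμ1 q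
  -- the discrete Lyapunov quantity
  set Q : ℕ → ℝ := fun k => x (t (k + 1)) ⬝ᵥ P (ι k) *ᵥ x (t (k + 1)) with hQdef
  have hQnn : ∀ k, 0 ≤ Q k := fun k => my_qf_nonneg (hPpos (ι k)).posSemidef _
  have hQstep : ∀ k, Q (k + 1) ≤ μ * Q k := by
    intro k
    have h2 := hμΦ (ι (k + 1), ι k) (Ne.symm (hι k)) (t (k + 2) - t (k + 1)) (hdc (k + 1))
      (x (t (k + 1)))
    rw [← hstep (k + 1)] at h2
    calc Q (k + 1) ≤ μf (ι (k + 1), ι k) * Q k := h2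
      _ ≤ μ * Q k := mul_le_mul_of_nonneg_right
          (Finset.le_sup' μf (Finset.mem_univ (ι (k + 1), ι k))) (hQnn k)
  have hQgeo : ∀ k, Q k ≤ μ ^ k * Q 0 := by
    intro k
    induction k with
    | zero => simp
    | succ k ih =>
      calc Q (k + 1) ≤ μ * Q k := hQstep k
        _ ≤ μ * (μ ^ k * Q 0) := mul_le_mul_of_nonneg_left ih hμ0'
        _ = μ ^ (k + 1) * Q 0 := by ring
  have hQ0 : Tendsto Q atTop (𝓝 0) := by
    apply squeeze_zero hQnn hQgeo
    simpa using (tendsto_pow_atTop_nhds_zero_of_lt_one hμ0' hμ1').mul_const (Q 0)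
  -- uniform lower bound on the Lyapunov functions
  have hlowall : ∀ i : Fin N, ∃ c > 0, ∀ v : Fin n → ℝ, c * ‖v‖ ^ 2 ≤ v ⬝ᵥ P i *ᵥ v := by
    intro i
    obtain ⟨c, hc, hcl⟩ := my_unif_lower hn (Set.Icc 0 0) isCompact_Icc (fun _ => P i)
      continuous_const (fun _ _ => hPpos i)
    exact ⟨c, hc, fun v => hcl 0 ⟨le_rfl, le_rfl⟩ v⟩
  choose cP hcP hcPl using hlowall
  set c : ℝ := Finset.univ.inf' Finset.univ_nonempty cP with hcdef
  have hc : 0 < c := (Finset.lt_inf'_iff _).2 fun i _ => hcP i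
  have hxk2 : ∀ k, ‖x (t (k + 1))‖ ^ 2 ≤ Q k / c := by
    intro k
    rw [le_div_iff₀ hc, mul_comm]
    calc c * ‖x (t (k + 1))‖ ^ 2 ≤ cP (ι k) * ‖x (t (k + 1))‖ ^ 2 :=
          mul_le_mul_of_nonneg_right (Finset.inf'_le cP (Finset.mem_univ (ι k))) (sq_nonneg _)
      _ ≤ Q k := hcPl (ι k) _
  have hxknorm : Tendsto (fun k => ‖x (t (k + 1))‖ ^ 2) atTop (𝓝 0) := by
    apply squeeze_zero (fun k => sq_nonneg _) hxk2
    simpa using hQ0.div_const c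
  have hxknorm' : Tendsto (fun k => ‖x (t k)‖ ^ 2) atTop (𝓝 0) :=
    (tendsto_add_atTop_iff_nat 1).1 hxknorm
  -- uniform bound inside switching intervals
  have hbode : ∀ i : Fin N, ∃ C > 0, ∀ k, ι k = i → ∀ s ∈ Set.Icc (t k) (t (k + 1)),
      ‖x s‖ ^ 2 ≤ C * ‖x (t k)‖ ^ 2 := by
    intro i
    by_cases hiS : i ∈ S
    · obtain ⟨Λ, hΛ, hup⟩ := my_qf_upper hn (P i)
      refine ⟨Λ / cP i, div_pos hΛ (hcP i), ?_⟩
      intro k hk s hs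
      subst hk
      have hxs := hx k s hs
      have h1 : cP (ι k) * ‖x s‖ ^ 2 ≤ (x s) ⬝ᵥ P (ι k) *ᵥ (x s) := hcPl (ι k) (x s)
      have h2 : (x s) ⬝ᵥ P (ι k) *ᵥ x s ≤ x (t k) ⬝ᵥ P (ι k) *ᵥ x (t k) := by
        rw [hxs]
        have ha := my_lyap_antitone (A (ι k)) (P (ι k)) (hcontS _ hiS).posSemidef (x (t k))
        have h0le : (0 : ℝ) ≤ s - t k := sub_nonneg.2 hs.1
        have := ha h0le
        simpa [zero_smul, exp_zero, Matrix.one_mulVec] using this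
      have h3 := hup (x (t k))
      rw [div_mul_eq_mul_div, le_div_iff₀ (hcP (ι k))]
      nlinarith [h1, h2, h3]
    · obtain ⟨C, hC, hfb⟩ := my_flow_bound (A i) hn 0 (Tmax i)
      refine ⟨C ^ 2, by positivity, ?_⟩
      intro k hk s hs
      subst hk
      have hxs := hx k s hs
      have hTin : s - t k ∈ Set.Icc (0 : ℝ) (Tmax (ι k)) :=
        ⟨sub_nonneg.2 hs.1, le_trans (sub_le_sub_right hs.2 (t k)) (hdwell k hiS).2⟩
      have hb := hfb (s - t k) hTin (x (t k))
      rw [hxs]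
      nlinarith [norm_nonneg (exp ((s - t k) • A (ι k)) *ᵥ x (t k)), norm_nonneg (x (t k)),
        hb, hC]
  choose Cb hCb hCbl using hbode
  set Cmax : ℝ := Finset.univ.sup' Finset.univ_nonempty Cb with hCmaxdef
  have hibound : ∀ k, ∀ s ∈ Set.Icc (t k) (t (k + 1)), ‖x s‖ ^ 2 ≤ Cmax * ‖x (t k)‖ ^ 2 := by
    intro k s hs
    exact le_trans (hCbl (ι k) k rfl s hs)
      (mul_le_mul_of_nonneg_right (Finset.le_sup' Cb (Finset.mem_univ (ι k))) (sq_nonneg _))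
  -- conclusion
  rw [Metric.tendsto_atTop]
  intro ε hε
  have hev : ∀ᶠ k in atTop, Cmax * ‖x (t k)‖ ^ 2 < ε ^ 2 := by
    have h0 : (0 : ℝ) < ε ^ 2 := by positivity
    have := hxknorm'.const_mul Cmax
    rw [mul_zero] at this
    exact this.eventually_lt_const h0
  obtain ⟨K, hK⟩ := eventually_atTop.1 hev
  refine ⟨t K, fun s hs => ?_⟩
  have hex : ∃ m, s < t m := (htop.eventually_gt_atTop s).exists
  have hm : s < t (Nat.find hex) := Nat.find_spec hex
  have hm0 : Nat.find hex ≠ 0 := by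
    intro h
    rw [h] at hm
    have h1 : t 0 ≤ t K := htmono.monotone (Nat.zero_le K)
    linarith
  obtain ⟨k, hk⟩ : ∃ k, Nat.find hex = k + 1 :=
    ⟨Nat.find hex - 1, (Nat.succ_pred_eq_of_pos (Nat.pos_of_ne_zero hm0)).symm⟩
  have hks : t k ≤ s := by
    by_contra h
    push_neg at h
    exact Nat.find_min hex (by omega) h
  have hsk1 : s < t (k + 1) := hk ▸ hm
  have hKk : K ≤ k := by
    by_contra h
    push_neg at h
    have h1 : t (k + 1) ≤ t K := htmono.monotone (by omega)
    linarith
  have hb := hibound k s ⟨hks, hsk1.le⟩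
  have hlt : ‖x s‖ ^ 2 < ε ^ 2 := lt_of_le_of_lt hb (hK k hKk)
  have : ‖x s‖ < ε := lt_of_pow_lt_pow_left₀ 2 hε.le hlt
  simpa [dist_eq_norm] using this
end

section
/- Let T̄ > 0. Suppose there exist a scalar ε > 0, symmetric positive definite n×n matrices P_1, …, P_N, and, for each pair i ≠ j in {1,…,N}, a continuously differentiable symmetric 3n×3n matrix function Z_{ij} : [0, T̄] → S^{3n} satisfying the looping (boundary) condition Y_2^T Z_{ij}(T̄) Y_2 − Y_1^T Z_{ij}(0) Y_1 = 0, such that A_i^T P_i + P_i A_i ≺ 0 for all i and, for all τ ∈ [0, T̄] and all i ≠ j, Ψ_{ij}(T̄) + He(Z_{ij}(τ) D_n(A_i)) + Z_{ij}'(τ) ⪯ 0. Then, with the same matrices P_i, the discrete-time dwell-time conditions exp(A_i^T T̄) P_i exp(A_i T̄) − P_j ≺ 0 hold for all i ≠ j. -/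
open Matrix Filter Topology

/-- `Y₁ = [Iₙ 0; Iₙ 0; 0 Iₙ]`. -/
def Y1 (n : ℕ) : Matrix (Fin n ⊕ (Fin n ⊕ Fin n)) (Fin n ⊕ Fin n) ℝ :=
  Matrix.fromBlocks 1 0 (Matrix.fromRows 1 0) (Matrix.fromRows 0 1)

/-- `Y₂ = [0 Iₙ; Iₙ 0; 0 Iₙ]`. -/
def Y2 (n : ℕ) : Matrix (Fin n ⊕ (Fin n ⊕ Fin n)) (Fin n ⊕ Fin n) ℝ :=
  Matrix.fromBlocks 0 1 (Matrix.fromRows 1 0) (Matrix.fromRows 0 1)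

/-- `Dₙ(M) = diag(M, 0ₙ, 0ₙ)`. -/
def Dn {n : ℕ} (M : Matrix (Fin n) (Fin n) ℝ) :
    Matrix (Fin n ⊕ (Fin n ⊕ Fin n)) (Fin n ⊕ (Fin n ⊕ Fin n)) ℝ :=
  Matrix.fromBlocks M 0 0 0

/-- `He(M) = M + Mᵀ`. -/
def He {m : Type*} (M : Matrix m m ℝ) : Matrix m m ℝ := M + Mᵀ

/-- `Ψᵢⱼ(T) = diag(T(Aᵢᵀ Pᵢ + Pᵢ Aᵢ), Pᵢ − Pⱼ + ε Iₙ, 0ₙ)`. -/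
def Psi {n : ℕ} (T ε : ℝ) (Ai Pi Pj : Matrix (Fin n) (Fin n) ℝ) :
    Matrix (Fin n ⊕ (Fin n ⊕ Fin n)) (Fin n ⊕ (Fin n ⊕ Fin n)) ℝ :=
  Matrix.fromBlocks (T • (Aiᵀ * Pi + Pi * Ai)) 0 0
    (Matrix.fromBlocks (Pi - Pj + ε • (1 : Matrix (Fin n) (Fin n) ℝ)) 0 0 0)

lemma expEntry_hasDerivAt {n : ℕ} (A : Matrix (Fin n) (Fin n) ℝ) (τ : ℝ) (a b : Fin n) :
    HasDerivAt (fun s : ℝ => NormedSpace.exp (s • A) a b)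
      ((A * NormedSpace.exp (τ • A)) a b) τ := by
  letI : SeminormedRing (Matrix (Fin n) (Fin n) ℝ) := Matrix.linftyOpSemiNormedRing
  letI : NormedRing (Matrix (Fin n) (Fin n) ℝ) := Matrix.linftyOpNormedRing
  letI : NormedAlgebra ℝ (Matrix (Fin n) (Fin n) ℝ) := Matrix.linftyOpNormedAlgebra
  have h := hasDerivAt_exp_smul_const' (𝕂 := ℝ) A τ
  let L : Matrix (Fin n) (Fin n) ℝ →ₗ[ℝ] ℝ :=
    { toFun := fun M => M a b, map_add' := fun _ _ => rfl, map_smul' := fun _ _ => rfl }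
  exact (L.toContinuousLinearMap.hasFDerivAt
    (x := NormedSpace.exp (τ • A))).comp_hasDerivAt τ h

lemma hasDerivAt_quadForm {m : Type*} [Fintype m]
    (u : ℝ → m → ℝ) (u' : m → ℝ) (M : ℝ → Matrix m m ℝ) (M' : Matrix m m ℝ) (τ : ℝ)
    (hu : ∀ a, HasDerivAt (fun s => u s a) (u' a) τ)
    (hM : ∀ a b, HasDerivAt (fun s => M s a b) (M' a b) τ) :
    HasDerivAt (fun s => u s ⬝ᵥ (M s) *ᵥ (u s))
      (u' ⬝ᵥ (M τ) *ᵥ (u τ) + u τ ⬝ᵥ M' *ᵥ u τ + u τ ⬝ᵥ (M τ) *ᵥ u') τ := by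
  have h : HasDerivAt (fun s => ∑ a, u s a * ∑ b, M s a b * u s b)
      (∑ a, (u' a * ∑ b, M τ a b * u τ b
        + u τ a * ∑ b, (M' a b * u τ b + M τ a b * u' b))) τ := by
    refine HasDerivAt.fun_sum fun a _ => ?_
    exact (hu a).mul (HasDerivAt.fun_sum fun b _ => (hM a b).mul (hu b))
  convert h using 1
  · rfl
  simp [dotProduct, mulVec, Finset.sum_add_distrib, mul_add, Finset.mul_sum]
  ring

lemma dot_tA {m k : Type*} [Fintype m] [Fintype k] (M : Matrix m k ℝ) (v : k → ℝ) (w : m → ℝ) :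
    v ⬝ᵥ Mᵀ *ᵥ w = (M *ᵥ v) ⬝ᵥ w := by
  rw [Matrix.dotProduct_mulVec, Matrix.vecMul_transpose]

/-- Theorem 3: affine looped-functional conditions imply the
discrete-time minimum dwell-time conditions of Theorem 1 with the same `Pᵢ`. -/
theorem looped_functional_implies_discrete_condition
    (n N : ℕ) (hn : 1 ≤ n) (hN : 2 ≤ N)
    (A : Fin N → Matrix (Fin n) (Fin n) ℝ)
    (T ε : ℝ) (hT : 0 < T) (hε : 0 < ε)
    (P : Fin N → Matrix (Fin n) (Fin n) ℝ)
    (hPsymm : ∀ i, (P i).IsSymm)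
    (hPpos : ∀ i, (P i).PosDef)
    (Z Z' : Fin N → Fin N → ℝ →
      Matrix (Fin n ⊕ (Fin n ⊕ Fin n)) (Fin n ⊕ (Fin n ⊕ Fin n)) ℝ)
    (hZsymm : ∀ i j, i ≠ j → ∀ τ ∈ Set.Icc (0 : ℝ) T, (Z i j τ).IsSymm)
    (hZderiv : ∀ i j, i ≠ j → ∀ τ ∈ Set.Icc (0 : ℝ) T, ∀ a b,
      HasDerivAt (fun s => Z i j s a b) (Z' i j τ a b) τ)
    (hZ'cont : ∀ i j, i ≠ j → ContinuousOn (Z' i j) (Set.Icc (0 : ℝ) T))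
    -- looping (boundary) condition
    (hloop : ∀ i j, i ≠ j →
      (Y2 n)ᵀ * Z i j T * Y2 n - (Y1 n)ᵀ * Z i j 0 * Y1 n = 0)
    -- continuous-time conditions
    (hcont : ∀ i, (-((A i)ᵀ * P i + P i * A i)).PosDef)
    -- infinite-dimensional LMI conditions
    (hLMI : ∀ i j, i ≠ j → ∀ τ ∈ Set.Icc (0 : ℝ) T,
      (-(Psi T ε (A i) (P i) (P j) + He (Z i j τ * Dn (A i)) + Z' i j τ)).PosSemidef) :
    ∀ i j, i ≠ j →
      (-(NormedSpace.exp (T • (A i)ᵀ) * P i * NormedSpace.exp (T • A i) - P j)).PosDef := by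
  intro i j hij
  set E := NormedSpace.exp (T • A i) with hE
  have hTt : NormedSpace.exp (T • (A i)ᵀ) = Eᵀ := by
    rw [← Matrix.transpose_smul, Matrix.exp_transpose]
  rw [hTt, neg_sub]
  rw [posDef_iff_dotProduct_mulVec]
  constructor
  · -- Hermitian
    rw [Matrix.IsHermitian, conjTranspose_eq_transpose_of_trivial, transpose_sub,
      Matrix.transpose_mul, Matrix.transpose_mul, transpose_transpose, hPsymm i, hPsymm j,
      Matrix.mul_assoc]
  · intro x hx
    rw [star_trivial]
    -- the trajectory
    set xf : ℝ → Fin n → ℝ := fun s => NormedSpace.exp (s • A i) *ᵥ x with hxf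
    have hxf0 : xf 0 = x := by
      rw [hxf]; simp [zero_smul, NormedSpace.exp_zero, one_mulVec]
    have hxfT : xf T = E *ᵥ x := rfl
    have hxd : ∀ (τ : ℝ) (k : Fin n), HasDerivAt (fun s => xf s k) ((A i *ᵥ xf τ) k) τ := by
      intro τ k
      have h := HasDerivAt.fun_sum
        (fun b (_ : b ∈ Finset.univ) => (expEntry_hasDerivAt (A i) τ k b).mul_const (x b))
      refine h.congr_deriv (Eq.symm ?_)
      simp only [hxf, mulVec, dotProduct, Matrix.mul_apply, Finset.sum_mul, Finset.mul_sum]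
      rw [Finset.sum_comm]
      apply Finset.sum_congr rfl
      intro b _
      apply Finset.sum_congr rfl
      intro c _
      ring
    set v : (Fin n ⊕ Fin n) → ℝ := Sum.elim x (xf T) with hv
    set ξ : ℝ → (Fin n ⊕ (Fin n ⊕ Fin n)) → ℝ := fun s => Sum.elim (xf s) v with hξ
    set c : ℝ := x ⬝ᵥ (P i - P j + ε • (1 : Matrix (Fin n) (Fin n) ℝ)) *ᵥ x with hc
    set F : ℝ → ℝ :=
      fun s => ξ s ⬝ᵥ (Z i j s) *ᵥ ξ s + T * (xf s ⬝ᵥ (P i) *ᵥ xf s) + s * c with hF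
    have hFd : ∀ τ ∈ Set.Icc (0:ℝ) T, HasDerivAt F
        (ξ τ ⬝ᵥ (Psi T ε (A i) (P i) (P j) + He (Z i j τ * Dn (A i)) + Z' i j τ) *ᵥ ξ τ) τ := by
      intro τ hτ
      have hud : ∀ a, HasDerivAt (fun s => ξ s a)
          ((Sum.elim (A i *ᵥ xf τ) (0 : (Fin n ⊕ Fin n) → ℝ)) a) τ := by
        rintro (k | k)
        · exact hxd τ k
        · exact hasDerivAt_const τ (v k)
      have hq := hasDerivAt_quadForm ξ _ (Z i j) (Z' i j τ) τ hud (hZderiv i j hij τ hτ)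
      have hh := hasDerivAt_quadForm xf (A i *ᵥ xf τ) (fun _ => P i) 0 τ (hxd τ)
        (fun a b => hasDerivAt_const τ _)
      have hall := (hq.add (hh.const_mul T)).add (hasDerivAt_mul_const c)
      refine hall.congr_deriv (Eq.symm ?_)
      -- now the algebraic identity between the two derivative values
      have hsym : (Z i j τ)ᵀ = Z i j τ := hZsymm i j hij τ hτ
      have hxi' : Sum.elim (A i *ᵥ xf τ) (0 : (Fin n ⊕ Fin n) → ℝ) = (Dn (A i)) *ᵥ ξ τ := by
        funext a
        rcases a with k | k <;>
          simp [Dn, hξ, Matrix.fromBlocks_mulVec, Matrix.zero_mulVec]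
      have e1 : ξ τ ⬝ᵥ (Psi T ε (A i) (P i) (P j)) *ᵥ ξ τ
          = T * ((A i *ᵥ xf τ) ⬝ᵥ (P i) *ᵥ xf τ + xf τ ⬝ᵥ (P i) *ᵥ (A i *ᵥ xf τ)) + c := by
        rw [hξ]
        show (Sum.elim (xf τ) v) ⬝ᵥ _ *ᵥ (Sum.elim (xf τ) v) = _
        rw [Psi, Matrix.fromBlocks_mulVec]
        simp only [Sum.elim_comp_inl, Sum.elim_comp_inr, Matrix.zero_mulVec, add_zero, zero_add]
        rw [hv, Matrix.fromBlocks_mulVec]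
        simp only [Sum.elim_comp_inl, Sum.elim_comp_inr, Matrix.zero_mulVec, add_zero, zero_add]
        rw [sumElim_dotProduct_sumElim, sumElim_dotProduct_sumElim]
        rw [Matrix.smul_mulVec, dotProduct_smul, smul_eq_mul]
        rw [Matrix.add_mulVec, dotProduct_add, ← Matrix.mulVec_mulVec, ← Matrix.mulVec_mulVec,
          dot_tA, dotProduct_zero, add_zero, hc]
      have e2 : ξ τ ⬝ᵥ (He (Z i j τ * Dn (A i))) *ᵥ ξ τ
          = (Dn (A i) *ᵥ ξ τ) ⬝ᵥ (Z i j τ) *ᵥ ξ τ + ξ τ ⬝ᵥ (Z i j τ) *ᵥ (Dn (A i) *ᵥ ξ τ) := by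
        have ht : (Z i j τ * Dn (A i))ᵀ = (Dn (A i))ᵀ * Z i j τ := by
          rw [Matrix.transpose_mul, hsym]
        rw [He, Matrix.add_mulVec, dotProduct_add, ht, ← Matrix.mulVec_mulVec,
          ← Matrix.mulVec_mulVec, dot_tA, add_comm]
      rw [Matrix.add_mulVec, Matrix.add_mulVec, dotProduct_add, dotProduct_add, e1, e2, hxi']
      simp only [Matrix.zero_mulVec, dotProduct_zero]
      ring
    have hDn : ∀ τ ∈ Set.Icc (0:ℝ) T,
        (ξ τ ⬝ᵥ (Psi T ε (A i) (P i) (P j) + He (Z i j τ * Dn (A i)) + Z' i j τ) *ᵥ ξ τ) ≤ 0 := by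
      intro τ hτ
      have h2 := (hLMI i j hij τ hτ).dotProduct_mulVec_nonneg (ξ τ)
      rw [star_trivial, Matrix.neg_mulVec, dotProduct_neg] at h2
      linarith
    have hcontF : ContinuousOn F (Set.Icc 0 T) :=
      fun τ hτ => ((hFd τ hτ).continuousAt).continuousWithinAt
    have hanti : AntitoneOn F (Set.Icc 0 T) := by
      apply antitoneOn_of_deriv_nonpos (convex_Icc 0 T) hcontF
      · intro τ hτ
        rw [interior_Icc] at hτ
        exact ((hFd τ (Set.Ioo_subset_Icc_self hτ)).differentiableAt).differentiableWithinAt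
      · intro τ hτ
        rw [interior_Icc] at hτ
        rw [(hFd τ (Set.Ioo_subset_Icc_self hτ)).deriv]
        exact hDn τ (Set.Ioo_subset_Icc_self hτ)
    have hFT : F T ≤ F 0 :=
      hanti (Set.left_mem_Icc.2 hT.le) (Set.right_mem_Icc.2 hT.le) hT.le
    -- boundary condition
    have hxi0 : ξ 0 = Y1 n *ᵥ v := by
      funext a
      rcases a with k | k | k <;>
        simp [hξ, hv, hxf0, Y1, Matrix.fromBlocks_mulVec, Matrix.fromRows_mulVec,
          Matrix.one_mulVec, Matrix.zero_mulVec]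
    have hxiT : ξ T = Y2 n *ᵥ v := by
      funext a
      rcases a with k | k | k <;>
        simp [hξ, hv, Y2, Matrix.fromBlocks_mulVec, Matrix.fromRows_mulVec,
          Matrix.one_mulVec, Matrix.zero_mulVec]
    have hqTq0 : ξ T ⬝ᵥ (Z i j T) *ᵥ ξ T = ξ 0 ⬝ᵥ (Z i j 0) *ᵥ ξ 0 := by
      have h0 := congrArg (fun M => v ⬝ᵥ M *ᵥ v) (hloop i j hij)
      simp only [Matrix.sub_mulVec, dotProduct_sub, Matrix.zero_mulVec, dotProduct_zero] at h0
      have eT : v ⬝ᵥ ((Y2 n)ᵀ * Z i j T * Y2 n) *ᵥ v = ξ T ⬝ᵥ (Z i j T) *ᵥ ξ T := by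
        rw [← Matrix.mulVec_mulVec, ← Matrix.mulVec_mulVec, dot_tA, ← hxiT]
      have e0 : v ⬝ᵥ ((Y1 n)ᵀ * Z i j 0 * Y1 n) *ᵥ v = ξ 0 ⬝ᵥ (Z i j 0) *ᵥ ξ 0 := by
        rw [← Matrix.mulVec_mulVec, ← Matrix.mulVec_mulVec, dot_tA, ← hxi0]
      rw [eT, e0] at h0
      linarith
    -- unfold F T ≤ F 0
    rw [hF] at hFT
    simp only [zero_mul, add_zero] at hFT
    rw [hqTq0] at hFT
    have key : xf T ⬝ᵥ (P i) *ᵥ xf T + c ≤ xf 0 ⬝ᵥ (P i) *ᵥ xf 0 := by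
      have h3 : T * (xf T ⬝ᵥ (P i) *ᵥ xf T + c) ≤ T * (xf 0 ⬝ᵥ (P i) *ᵥ xf 0) := by linarith
      exact le_of_mul_le_mul_left h3 hT
    have hcval : c = x ⬝ᵥ (P i) *ᵥ x - x ⬝ᵥ (P j) *ᵥ x + ε * (x ⬝ᵥ x) := by
      rw [hc, Matrix.add_mulVec, Matrix.sub_mulVec, dotProduct_add, dotProduct_sub,
        Matrix.smul_mulVec, Matrix.one_mulVec, dotProduct_smul, smul_eq_mul]
    have hxx : 0 < x ⬝ᵥ x := by
      rcases lt_or_eq_of_le (Finset.sum_nonneg fun k _ => mul_self_nonneg (x k)) with h | h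
      · exact h
      · exact absurd (dotProduct_self_eq_zero.mp h.symm) hx
    have hgoal : x ⬝ᵥ (P j - Eᵀ * P i * E) *ᵥ x
        = x ⬝ᵥ (P j) *ᵥ x - (E *ᵥ x) ⬝ᵥ (P i) *ᵥ (E *ᵥ x) := by
      rw [Matrix.sub_mulVec, dotProduct_sub, Matrix.mul_assoc, ← Matrix.mulVec_mulVec,
        ← Matrix.mulVec_mulVec, dot_tA]
    rw [hgoal]
    rw [hxf0, hxfT] at key
    rw [hcval] at key
    nlinarith [hε, hxx]
end

section
/- Let 0 < T_i^min < T_i^max < ∞ for each i ∈ {1,…,N}. Suppose there exist a scalar ε > 0, symmetric positive definite n×n matrices P_1, …, P_N, and, for each pair i ≠ j, a symmetric 3n×3n matrix function Z_{ij} : [0, T_i^max] × [T_i^min, T_i^max] → S^{3n}, continuously differentiable in its first argument, such that for every T ∈ [T_i^min, T_i^max]: Y_2^T Z_{ij}(T, T) Y_2 − Y_1^T Z_{ij}(0, T) Y_1 = 0 and, for all τ ∈ [0, T], Ψ_{ij}(T) + He(Z_{ij}(τ, T) D_n(A_i)) + ∂Z_{ij}/∂τ(τ, T) ⪯ 0.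 Then the switched system ẋ = A_{σ(t)} x with mode-dependent dwell-times is globally asymptotically stable over the class of switching sequences satisfying t_{k+1} − t_k ∈ [T^min_{i_k}, T^max_{i_k}] for all k. -/
open Matrix Filter Topology

open NormedSpace in
lemma LF_expEntry_hasDerivAt {n : ℕ} (A : Matrix (Fin n) (Fin n) ℝ) (τ : ℝ) (a b : Fin n) :
    HasDerivAt (fun s : ℝ => exp (s • A) a b) ((A * exp (τ • A)) a b) τ := by
  letI : SeminormedRing (Matrix (Fin n) (Fin n) ℝ) := Matrix.linftyOpSemiNormedRing
  letI : NormedRing (Matrix (Fin n) (Fin n) ℝ) := Matrix.linftyOpNormedRing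
  letI : NormedAlgebra ℝ (Matrix (Fin n) (Fin n) ℝ) := Matrix.linftyOpNormedAlgebra
  have h := hasDerivAt_exp_smul_const' (𝕂 := ℝ) A τ
  have hL := (LinearMap.toContinuousLinearMap (Matrix.entryLinearMap ℝ ℝ a b)).hasFDerivAt
    (x := exp (τ • A))
  exact hL.comp_hasDerivAt τ h

open NormedSpace in
lemma LF_exp_bound {n : ℕ} (A : Matrix (Fin n) (Fin n) ℝ) (Tmx : ℝ) (hTmx : 0 ≤ Tmx) :
    ∃ C : ℝ, 0 ≤ C ∧ ∀ s ∈ Set.Icc (0:ℝ) Tmx, ∀ a b, |exp (s • A) a b| ≤ C := by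
  have hcont : ∀ a b : Fin n, Continuous (fun s : ℝ => exp (s • A) a b) := fun a b =>
    continuous_iff_continuousAt.mpr fun τ => (LF_expEntry_hasDerivAt A τ a b).continuousAt
  have hFcont : Continuous (fun s : ℝ => ∑ a : Fin n, ∑ b : Fin n, |exp (s • A) a b|) := by
    apply continuous_finset_sum; intro a _
    apply continuous_finset_sum; intro b _
    exact (hcont a b).abs
  obtain ⟨s0, _, hmax0⟩ := isCompact_Icc.exists_isMaxOn
    ⟨0, Set.left_mem_Icc.mpr hTmx⟩ hFcont.continuousOn
  have hmax := isMaxOn_iff.mp hmax0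
  refine ⟨∑ a : Fin n, ∑ b : Fin n, |exp (s0 • A) a b|,
    Finset.sum_nonneg fun a _ => Finset.sum_nonneg fun b _ => abs_nonneg _, ?_⟩
  intro s hs a b
  refine le_trans ?_ (hmax s hs)
  calc |exp (s • A) a b| ≤ ∑ b' : Fin n, |exp (s • A) a b'| :=
        Finset.single_le_sum (f := fun b' => |exp (s • A) a b'|)
          (fun b' _ => abs_nonneg _) (Finset.mem_univ b)
    _ ≤ ∑ a' : Fin n, ∑ b' : Fin n, |exp (s • A) a' b'| :=
        Finset.single_le_sum (f := fun a' => ∑ b' : Fin n, |exp (s • A) a' b'|)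
          (fun a' _ => Finset.sum_nonneg fun b' _ => abs_nonneg _) (Finset.mem_univ a)

lemma LF_hasDerivAt_quad {m : Type*} [Fintype m] (ξ : ℝ → m → ℝ) (ξd : m → ℝ)
    (M : ℝ → Matrix m m ℝ) (Md : Matrix m m ℝ) (τ : ℝ)
    (hξ : ∀ a, HasDerivAt (fun s => ξ s a) (ξd a) τ)
    (hM : ∀ a b, HasDerivAt (fun s => M s a b) (Md a b) τ) :
    HasDerivAt (fun s => ξ s ⬝ᵥ (M s *ᵥ ξ s))
      (ξd ⬝ᵥ (M τ *ᵥ ξ τ) + ξ τ ⬝ᵥ (Md *ᵥ ξ τ) + ξ τ ⬝ᵥ (M τ *ᵥ ξd)) τ := by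
  have key : ∀ a : m, HasDerivAt (fun s => ξ s a * ∑ b, M s a b * ξ s b)
      (ξd a * (∑ b, M τ a b * ξ τ b) +
        ξ τ a * (∑ b, (Md a b * ξ τ b + M τ a b * ξd b))) τ := fun a =>
    (hξ a).mul (HasDerivAt.fun_sum fun b _ => (hM a b).mul (hξ b))
  have h := HasDerivAt.fun_sum (fun a (_ : a ∈ Finset.univ) => key a)
  have e1 : (fun s => ξ s ⬝ᵥ (M s *ᵥ ξ s)) =
      fun s => ∑ a, ξ s a * ∑ b, M s a b * ξ s b := by
    funext s; simp [dotProduct, mulVec]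
  rw [e1]
  refine h.congr_deriv ?_
  simp only [dotProduct, mulVec, Finset.sum_add_distrib, mul_add, Finset.mul_sum]
  ring

lemma LF_dot_transpose_mulVec {m p : Type*} [Fintype m] [Fintype p]
    (M : Matrix m p ℝ) (a : p → ℝ) (b : m → ℝ) :
    a ⬝ᵥ (Mᵀ *ᵥ b) = (M *ᵥ a) ⬝ᵥ b := by
  rw [Matrix.dotProduct_mulVec, Matrix.vecMul_transpose]

open NormedSpace in
lemma LF_core {n : ℕ} (Ai Pi Pj : Matrix (Fin n) (Fin n) ℝ) (ε T Tmx : ℝ)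
    (hT : 0 < T) (hTmx : T ≤ Tmx)
    (Zf Zf' : ℝ → Matrix (Fin n ⊕ (Fin n ⊕ Fin n)) (Fin n ⊕ (Fin n ⊕ Fin n)) ℝ)
    (hZsymm : ∀ τ ∈ Set.Icc (0:ℝ) Tmx, (Zf τ).IsSymm)
    (hZderiv : ∀ τ ∈ Set.Icc (0:ℝ) Tmx, ∀ a b, HasDerivAt (fun s => Zf s a b) (Zf' τ a b) τ)
    (hloop : (Y2 n)ᵀ * Zf T * Y2 n - (Y1 n)ᵀ * Zf 0 * Y1 n = 0)
    (hLMI : ∀ τ ∈ Set.Icc (0:ℝ) T, (-(Psi T ε Ai Pi Pj + He (Zf τ * Dn Ai) + Zf' τ)).PosSemidef)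
    (u : Fin n → ℝ) :
    (exp (T • Ai) *ᵥ u) ⬝ᵥ (Pi *ᵥ (exp (T • Ai) *ᵥ u)) + ε * (u ⬝ᵥ u)
      ≤ u ⬝ᵥ (Pj *ᵥ u) := by
  classical
  set y : ℝ → Fin n → ℝ := fun τ => exp (τ • Ai) *ᵥ u with hy_def
  set v : Fin n → ℝ := y T with hv_def
  have hy0 : y 0 = u := by simp [hy_def, exp_zero]
  set ξ : ℝ → (Fin n ⊕ (Fin n ⊕ Fin n)) → ℝ :=
    fun τ => Sum.elim (y τ) (Sum.elim u v) with hξ_def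
  set Q : Matrix (Fin n) (Fin n) ℝ := Pi - Pj + ε • 1 with hQ_def
  set g : ℝ → ℝ := fun τ =>
    T * (y τ ⬝ᵥ (Pi *ᵥ y τ)) + τ * (u ⬝ᵥ (Q *ᵥ u)) + ξ τ ⬝ᵥ (Zf τ *ᵥ ξ τ) with hg_def
  -- derivative of y entries
  have hy : ∀ τ (a : Fin n), HasDerivAt (fun s => y s a) ((Ai *ᵥ y τ) a) τ := by
    intro τ a
    have h1 : ∀ s : ℝ, y s a = ∑ b, exp (s • Ai) a b * u b := by
      intro s; simp [hy_def, mulVec, dotProduct]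
    have h2 : (Ai *ᵥ y τ) a = ∑ b, (Ai * exp (τ • Ai)) a b * u b := by
      have e : Ai *ᵥ y τ = (Ai * exp (τ • Ai)) *ᵥ u := by
        simp [hy_def, Matrix.mulVec_mulVec]
      rw [e]; simp [mulVec, dotProduct]
    rw [h2]; simp only [h1]
    exact HasDerivAt.fun_sum fun b _ => (LF_expEntry_hasDerivAt Ai τ a b).mul_const (u b)
  -- derivative of ξ entries
  have hξ : ∀ τ (a : Fin n ⊕ (Fin n ⊕ Fin n)),
      HasDerivAt (fun s => ξ s a) (Sum.elim (Ai *ᵥ y τ) 0 a) τ := by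
    intro τ a
    cases a with
    | inl a => exact hy τ a
    | inr a => exact hasDerivAt_const τ (Sum.elim u v a)
  -- D*ξ
  have hDξ : ∀ τ, Dn Ai *ᵥ ξ τ = Sum.elim (Ai *ᵥ y τ) 0 := by
    intro τ
    rw [Dn, Matrix.fromBlocks_mulVec]
    funext a; cases a <;>
      simp [hξ_def, Sum.elim_comp_inl, Sum.elim_comp_inr, Matrix.zero_mulVec]
  have dot_sum_elim : ∀ {p q : Type} [Fintype p] [Fintype q]
      (a b : p → ℝ) (c d : q → ℝ),
      Sum.elim a c ⬝ᵥ Sum.elim b d = a ⬝ᵥ b + c ⬝ᵥ d := by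
    intros p q _ _ a b c d
    simp [dotProduct, Fintype.sum_sum_type]
  -- derivative of g
  have hg : ∀ τ ∈ Set.Icc (0:ℝ) T, HasDerivAt g
      (ξ τ ⬝ᵥ ((Psi T ε Ai Pi Pj + He (Zf τ * Dn Ai) + Zf' τ) *ᵥ ξ τ)) τ := by
    intro τ hτ
    have hτ' : τ ∈ Set.Icc (0:ℝ) Tmx := ⟨hτ.1, hτ.2.trans hTmx⟩
    have h1 : HasDerivAt (fun s => y s ⬝ᵥ (Pi *ᵥ y s))
        ((Ai *ᵥ y τ) ⬝ᵥ (Pi *ᵥ y τ) + y τ ⬝ᵥ ((0 : Matrix (Fin n) (Fin n) ℝ) *ᵥ y τ)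
          + y τ ⬝ᵥ (Pi *ᵥ (Ai *ᵥ y τ))) τ :=
      LF_hasDerivAt_quad y (Ai *ᵥ y τ) (fun _ => Pi) 0 τ (hy τ)
        (fun a b => hasDerivAt_const _ _)
    have h2 : HasDerivAt (fun s : ℝ => s * (u ⬝ᵥ (Q *ᵥ u))) (u ⬝ᵥ (Q *ᵥ u)) τ := by
      simpa using (hasDerivAt_id τ).mul_const (u ⬝ᵥ (Q *ᵥ u))
    have h3 : HasDerivAt (fun s => ξ s ⬝ᵥ (Zf s *ᵥ ξ s))
        (Sum.elim (Ai *ᵥ y τ) 0 ⬝ᵥ (Zf τ *ᵥ ξ τ) + ξ τ ⬝ᵥ (Zf' τ *ᵥ ξ τ)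
          + ξ τ ⬝ᵥ (Zf τ *ᵥ Sum.elim (Ai *ᵥ y τ) 0)) τ :=
      LF_hasDerivAt_quad ξ _ Zf (Zf' τ) τ (hξ τ) (hZderiv τ hτ')
    have hsum := ((h1.const_mul T).add h2).add h3
    have hfun : g = fun s => T * (y s ⬝ᵥ (Pi *ᵥ y s)) + s * (u ⬝ᵥ (Q *ᵥ u))
        + ξ s ⬝ᵥ (Zf s *ᵥ ξ s) := hg_def
    rw [hfun]
    refine hsum.congr_deriv ?_
    -- algebra
    have hsplit : ξ τ ⬝ᵥ ((Psi T ε Ai Pi Pj + He (Zf τ * Dn Ai) + Zf' τ) *ᵥ ξ τ)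
        = ξ τ ⬝ᵥ (Psi T ε Ai Pi Pj *ᵥ ξ τ) + ξ τ ⬝ᵥ (He (Zf τ * Dn Ai) *ᵥ ξ τ)
          + ξ τ ⬝ᵥ (Zf' τ *ᵥ ξ τ) := by
      simp [Matrix.add_mulVec, dotProduct_add]
    have e1 : ξ τ ⬝ᵥ (Psi T ε Ai Pi Pj *ᵥ ξ τ)
        = T * ((Ai *ᵥ y τ) ⬝ᵥ (Pi *ᵥ y τ) + y τ ⬝ᵥ (Pi *ᵥ (Ai *ᵥ y τ)))
          + u ⬝ᵥ (Q *ᵥ u) := by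
      have hfb : Psi T ε Ai Pi Pj *ᵥ ξ τ =
          Sum.elim ((T • (Aiᵀ * Pi + Pi * Ai)) *ᵥ y τ)
            (Sum.elim (Q *ᵥ u) 0) := by
        rw [Psi, Matrix.fromBlocks_mulVec]
        have hinl : ξ τ ∘ Sum.inl = y τ := rfl
        have hinr : ξ τ ∘ Sum.inr = Sum.elim u v := rfl
        rw [hinl, hinr, Matrix.fromBlocks_mulVec]
        simp [hQ_def, Sum.elim_comp_inl, Sum.elim_comp_inr]
      rw [hfb, hξ_def]
      rw [dot_sum_elim, dot_sum_elim]
      have hTsc : y τ ⬝ᵥ ((T • (Aiᵀ * Pi + Pi * Ai)) *ᵥ y τ)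
          = T * ((Ai *ᵥ y τ) ⬝ᵥ (Pi *ᵥ y τ) + y τ ⬝ᵥ (Pi *ᵥ (Ai *ᵥ y τ))) := by
        rw [Matrix.smul_mulVec, dotProduct_smul, smul_eq_mul]
        congr 1
        rw [Matrix.add_mulVec, dotProduct_add, ← Matrix.mulVec_mulVec,
          ← Matrix.mulVec_mulVec, LF_dot_transpose_mulVec]
      rw [hTsc]; simp
    have e2 : ξ τ ⬝ᵥ (He (Zf τ * Dn Ai) *ᵥ ξ τ)
        = Sum.elim (Ai *ᵥ y τ) 0 ⬝ᵥ (Zf τ *ᵥ ξ τ)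
          + ξ τ ⬝ᵥ (Zf τ *ᵥ Sum.elim (Ai *ᵥ y τ) 0) := by
      have hZs : (Zf τ)ᵀ = Zf τ := hZsymm τ hτ'
      have hHe : He (Zf τ * Dn Ai) = Zf τ * Dn Ai + (Dn Ai)ᵀ * Zf τ := by
        rw [He, Matrix.transpose_mul, hZs]
      rw [hHe, Matrix.add_mulVec, dotProduct_add]
      simp only [← Matrix.mulVec_mulVec]
      rw [LF_dot_transpose_mulVec, hDξ]
      ring
    rw [hsplit, e1, e2]
    simp only [Matrix.zero_mulVec, dotProduct_zero, add_zero]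
    ring
  -- monotonicity
  have hmono : g T ≤ g 0 := by
    have hcont : ContinuousOn g (Set.Icc 0 T) := fun τ hτ =>
      ((hg τ hτ).continuousAt).continuousWithinAt
    have hanti : AntitoneOn g (Set.Icc 0 T) := by
      apply antitoneOn_of_deriv_nonpos (convex_Icc 0 T) hcont
      · intro τ hτ
        rw [interior_Icc] at hτ
        exact ((hg τ (Set.Ioo_subset_Icc_self hτ)).differentiableAt).differentiableWithinAt
      · intro τ hτ
        rw [interior_Icc] at hτ
        have hτ' := Set.Ioo_subset_Icc_self hτ
        rw [(hg τ hτ').deriv]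
        have hps := (hLMI τ hτ').dotProduct_mulVec_nonneg (ξ τ)
        simp only [Matrix.neg_mulVec, dotProduct_neg, star_trivial] at hps
        linarith
    exact hanti (Set.left_mem_Icc.mpr hT.le) (Set.right_mem_Icc.mpr hT.le) hT.le
  -- loop cancellation
  have hY1 : (Y1 n) *ᵥ Sum.elim u v = ξ 0 := by
    rw [Y1, Matrix.fromBlocks_mulVec]
    have hinl : Sum.elim u v ∘ Sum.inl = u := rfl
    have hinr : Sum.elim u v ∘ Sum.inr = v := rfl
    rw [hinl, hinr]
    funext a
    rcases a with a | a | a <;> simp [hξ_def, hy0]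
  have hY2 : (Y2 n) *ᵥ Sum.elim u v = ξ T := by
    rw [Y2, Matrix.fromBlocks_mulVec]
    have hinl : Sum.elim u v ∘ Sum.inl = u := rfl
    have hinr : Sum.elim u v ∘ Sum.inr = v := rfl
    rw [hinl, hinr]
    funext a
    rcases a with a | a | a <;> simp [hξ_def, hv_def]
  have hconj : ∀ (Y : Matrix (Fin n ⊕ (Fin n ⊕ Fin n)) (Fin n ⊕ Fin n) ℝ)
      (M : Matrix (Fin n ⊕ (Fin n ⊕ Fin n)) (Fin n ⊕ (Fin n ⊕ Fin n)) ℝ),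
      Sum.elim u v ⬝ᵥ ((Yᵀ * M * Y) *ᵥ Sum.elim u v)
        = (Y *ᵥ Sum.elim u v) ⬝ᵥ (M *ᵥ (Y *ᵥ Sum.elim u v)) := by
    intro Y M
    rw [Matrix.mul_assoc]
    simp only [← Matrix.mulVec_mulVec]
    rw [LF_dot_transpose_mulVec]
  have hloopq : ξ T ⬝ᵥ (Zf T *ᵥ ξ T) = ξ 0 ⬝ᵥ (Zf 0 *ᵥ ξ 0) := by
    have h2 := hconj (Y2 n) (Zf T)
    have h1 := hconj (Y1 n) (Zf 0)
    rw [hY2] at h2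
    rw [hY1] at h1
    rw [← h2, ← h1, sub_eq_zero.mp hloop]
  -- conclude
  have hgT : g T = T * (v ⬝ᵥ (Pi *ᵥ v)) + T * (u ⬝ᵥ (Q *ᵥ u)) + ξ T ⬝ᵥ (Zf T *ᵥ ξ T) := by
    rw [hg_def]
  have hg0 : g 0 = T * (u ⬝ᵥ (Pi *ᵥ u)) + ξ 0 ⬝ᵥ (Zf 0 *ᵥ ξ 0) := by
    rw [hg_def]; simp [hy0]
  have hQu : u ⬝ᵥ (Q *ᵥ u) = u ⬝ᵥ (Pi *ᵥ u) - u ⬝ᵥ (Pj *ᵥ u) + ε * (u ⬝ᵥ u) := by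
    rw [hQ_def]
    simp [Matrix.add_mulVec, Matrix.sub_mulVec, Matrix.smul_mulVec,
      dotProduct_add, dotProduct_sub, dotProduct_smul, smul_eq_mul]
  have hkey : T * (v ⬝ᵥ (Pi *ᵥ v)) + T * (u ⬝ᵥ (Q *ᵥ u)) ≤ T * (u ⬝ᵥ (Pi *ᵥ u)) := by
    have := hmono
    rw [hgT, hg0, hloopq] at this
    linarith
  have hdiv : v ⬝ᵥ (Pi *ᵥ v) + u ⬝ᵥ (Q *ᵥ u) ≤ u ⬝ᵥ (Pi *ᵥ u) := by
    nlinarith [hkey, hT]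
  rw [hQu] at hdiv
  have hvv : v = exp (T • Ai) *ᵥ u := rfl
  rw [← hvv]
  linarith

/-- Theorem 4: affine looped-functional conditions imply global
asymptotic stability under mode-dependent dwell-times
`t (k+1) − t k ∈ [T^min_{i_k}, T^max_{i_k}]`. Here `Z i j τ T` is `Z_{ij}(τ, T)`
and `Z' i j τ T` is the partial derivative `∂Z_{ij}/∂τ (τ, T)`. -/
theorem looped_functional_mode_dependent_stability
    (n N : ℕ) (hn : 1 ≤ n) (hN : 2 ≤ N)
    (A : Fin N → Matrix (Fin n) (Fin n) ℝ)
    (Tmin Tmax : Fin N → ℝ)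
    (hTmin : ∀ i, 0 < Tmin i) (hTord : ∀ i, Tmin i < Tmax i)
    (ε : ℝ) (hε : 0 < ε)
    (P : Fin N → Matrix (Fin n) (Fin n) ℝ)
    (hPsymm : ∀ i, (P i).IsSymm)
    (hPpos : ∀ i, (P i).PosDef)
    (Z Z' : Fin N → Fin N → ℝ → ℝ →
      Matrix (Fin n ⊕ (Fin n ⊕ Fin n)) (Fin n ⊕ (Fin n ⊕ Fin n)) ℝ)
    (hZsymm : ∀ i j, i ≠ j → ∀ T ∈ Set.Icc (Tmin i) (Tmax i),
      ∀ τ ∈ Set.Icc (0 : ℝ) (Tmax i), (Z i j τ T).IsSymm)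
    (hZderiv : ∀ i j, i ≠ j → ∀ T ∈ Set.Icc (Tmin i) (Tmax i),
      ∀ τ ∈ Set.Icc (0 : ℝ) (Tmax i), ∀ a b,
        HasDerivAt (fun s => Z i j s T a b) (Z' i j τ T a b) τ)
    (hZ'cont : ∀ i j, i ≠ j → ∀ T ∈ Set.Icc (Tmin i) (Tmax i),
      ContinuousOn (fun τ => Z' i j τ T) (Set.Icc (0 : ℝ) (Tmax i)))
    -- looping (boundary) condition, for every admissible dwell-time `T`
    (hloop : ∀ i j, i ≠ j → ∀ T ∈ Set.Icc (Tmin i) (Tmax i),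
      (Y2 n)ᵀ * Z i j T T * Y2 n - (Y1 n)ᵀ * Z i j 0 T * Y1 n = 0)
    -- infinite-dimensional LMI conditions
    (hLMI : ∀ i j, i ≠ j → ∀ T ∈ Set.Icc (Tmin i) (Tmax i), ∀ τ ∈ Set.Icc (0 : ℝ) T,
      (-(Psi T ε (A i) (P i) (P j) + He (Z i j τ T * Dn (A i)) + Z' i j τ T)).PosSemidef)
    -- a switching sequence with mode-dependent dwell-times
    (t : ℕ → ℝ) (ht0 : t 0 = 0) (htmono : StrictMono t)
    (htop : Tendsto t atTop atTop)
    (ι : ℕ → Fin N) (hι : ∀ k, ι (k + 1) ≠ ι k)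
    (hdwell : ∀ k, t (k + 1) - t k ∈ Set.Icc (Tmin (ι k)) (Tmax (ι k)))
    -- the corresponding trajectory from `x0`
    (x0 : Fin n → ℝ) (x : ℝ → Fin n → ℝ)
    (hx0 : x (t 0) = x0)
    (hx : ∀ k, ∀ s ∈ Set.Icc (t k) (t (k + 1)),
      x s = NormedSpace.exp ((s - t k) • A (ι k)) *ᵥ x (t k)) :
    Tendsto x atTop (𝓝 0) := by
  classical
  haveI : Nonempty (Fin N) := ⟨⟨0, by omega⟩⟩
  -- uniform bound on matrix exponential entries over admissible dwell times
  choose Cb hCb0 hCb using fun i : Fin N =>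
    LF_exp_bound (A i) (Tmax i) (le_of_lt ((hTmin i).trans (hTord i)))
  set CM : ℝ := Finset.univ.sup' Finset.univ_nonempty Cb with hCM_def
  have hCbCM : ∀ i, Cb i ≤ CM := fun i => Finset.le_sup' Cb (Finset.mem_univ i)
  -- the decrement inequality along switching instants
  have key : ∀ k : ℕ,
      x (t (k+2)) ⬝ᵥ (P (ι (k+1)) *ᵥ x (t (k+2))) + ε * (x (t (k+1)) ⬝ᵥ x (t (k+1)))
        ≤ x (t (k+1)) ⬝ᵥ (P (ι k) *ᵥ x (t (k+1))) := by
    intro k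
    have hij : ι (k+1) ≠ ι k := hι k
    have hdw := hdwell (k+1)
    set T := t (k+2) - t (k+1) with hT_def
    have hT0 : 0 < T := lt_of_lt_of_le (hTmin (ι (k+1))) hdw.1
    have hv : x (t (k+2)) = NormedSpace.exp (T • A (ι (k+1))) *ᵥ x (t (k+1)) := by
      have h := hx (k+1) (t (k+2)) ⟨(htmono (Nat.lt_succ_self (k+1))).le, le_refl _⟩
      rw [← hT_def] at h
      exact h
    have hc := LF_core (A (ι (k+1))) (P (ι (k+1))) (P (ι k)) ε T (Tmax (ι (k+1)))
      hT0 hdw.2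
      (fun τ => Z (ι (k+1)) (ι k) τ T) (fun τ => Z' (ι (k+1)) (ι k) τ T)
      (fun τ hτ => hZsymm _ _ hij T hdw τ hτ)
      (fun τ hτ => hZderiv _ _ hij T hdw τ hτ)
      (hloop _ _ hij T hdw)
      (fun τ hτ => hLMI _ _ hij T hdw τ hτ)
      (x (t (k+1)))
    rw [← hv] at hc
    exact hc
  set w : ℕ → Fin n → ℝ := fun k => x (t (k+1)) with hw_def
  set W : ℕ → ℝ := fun k => w k ⬝ᵥ (P (ι k) *ᵥ w k) with hW_def
  have hkey : ∀ k, W (k+1) + ε * (w k ⬝ᵥ w k) ≤ W k := fun k => key k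
  have hdot0 : ∀ (u : Fin n → ℝ), 0 ≤ u ⬝ᵥ u := fun u =>
    Finset.sum_nonneg fun i _ => mul_self_nonneg _
  have hW0 : ∀ k, 0 ≤ W k := by
    intro k
    have h := (hPpos (ι k)).posSemidef.dotProduct_mulVec_nonneg (w k)
    simpa using h
  have hanti : Antitone W := antitone_nat_of_succ_le fun k =>
    le_trans (le_add_of_nonneg_right (mul_nonneg hε.le (hdot0 (w k)))) (hkey k)
  have hbdd : BddBelow (Set.range W) := ⟨0, fun z hz => by
    obtain ⟨k, rfl⟩ := hz; exact hW0 k⟩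
  have hWlim : Tendsto W atTop (𝓝 (⨅ k, W k)) := tendsto_atTop_ciInf hanti hbdd
  have hWlim' : Tendsto (fun k => W (k+1)) atTop (𝓝 (⨅ k, W k)) :=
    hWlim.comp (tendsto_add_atTop_nat 1)
  have hdiff : Tendsto (fun k => W k - W (k+1)) atTop (𝓝 0) := by
    have h := hWlim.sub hWlim'
    simpa using h
  have hdots : Tendsto (fun k => w k ⬝ᵥ w k) atTop (𝓝 0) := by
    have hsq : Tendsto (fun k => ε * (w k ⬝ᵥ w k)) atTop (𝓝 0) :=
      tendsto_of_tendsto_of_tendsto_of_le_of_le tendsto_const_nhds hdiff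
        (fun k => mul_nonneg hε.le (hdot0 (w k))) (fun k => by linarith [hkey k])
    have h := hsq.const_mul ε⁻¹
    have h2 : (fun k => ε⁻¹ * (ε * (w k ⬝ᵥ w k))) = fun k => w k ⬝ᵥ w k := by
      funext k; field_simp
    rw [h2] at h
    simpa using h
  have hcoord : ∀ a, Tendsto (fun k => w k a) atTop (𝓝 0) := by
    intro a
    have hsq : Tendsto (fun k => (w k a)^2) atTop (𝓝 0) :=
      tendsto_of_tendsto_of_tendsto_of_le_of_le tendsto_const_nhds hdots
        (fun k => sq_nonneg _) (fun k => by
          have h : w k a * w k a ≤ ∑ b, w k b * w k b :=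
            Finset.single_le_sum (f := fun b => w k b * w k b)
              (fun b _ => mul_self_nonneg _) (Finset.mem_univ a)
          simpa [dotProduct, pow_two] using h)
    have habs : Tendsto (fun k => |w k a|) atTop (𝓝 0) := by
      have h := (Real.continuous_sqrt.tendsto 0).comp hsq
      simpa [Function.comp_def, Real.sqrt_sq_eq_abs] using h
    have hneg : Tendsto (fun k => -|w k a|) atTop (𝓝 0) := by
      simpa using habs.neg
    exact tendsto_of_tendsto_of_tendsto_of_le_of_le hneg habs
      (fun k => neg_abs_le _) (fun k => le_abs_self _)
  have hc : Tendsto (fun k => CM * ∑ b, |w k b|) atTop (𝓝 0) := by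
    have hsum : Tendsto (fun k => ∑ b, |w k b|) atTop (𝓝 0) := by
      have h := tendsto_finset_sum (Finset.univ : Finset (Fin n))
        (fun b _ => (hcoord b).abs)
      simpa using h
    have h := hsum.const_mul CM
    simpa using h
  -- bound on the trajectory inside each interval
  have hxb : ∀ k, ∀ s ∈ Set.Icc (t k) (t (k+1)), ∀ a,
      |x s a| ≤ CM * ∑ b, |x (t k) b| := by
    intro k s hs a
    have hsT : s - t k ∈ Set.Icc (0:ℝ) (Tmax (ι k)) :=
      ⟨sub_nonneg.mpr hs.1, le_trans (by linarith [hs.2]) (hdwell k).2⟩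
    have hxs := hx k s hs
    have hxe : x s a = ∑ b, NormedSpace.exp ((s - t k) • A (ι k)) a b * x (t k) b := by
      rw [hxs]; simp [mulVec, dotProduct]
    rw [hxe]
    calc |∑ b, NormedSpace.exp ((s - t k) • A (ι k)) a b * x (t k) b|
        ≤ ∑ b, |NormedSpace.exp ((s - t k) • A (ι k)) a b * x (t k) b| :=
          Finset.abs_sum_le_sum_abs _ _
      _ ≤ ∑ b, CM * |x (t k) b| := by
          apply Finset.sum_le_sum
          intro b _
          rw [abs_mul]
          exact mul_le_mul_of_nonneg_right
            (le_trans (hCb (ι k) _ hsT a b) (hCbCM (ι k))) (abs_nonneg _)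
      _ = CM * ∑ b, |x (t k) b| := by rw [Finset.mul_sum]
  -- conclude
  rw [tendsto_pi_nhds]
  intro a
  simp only [Pi.zero_apply]
  rw [Metric.tendsto_atTop]
  intro δ hδ
  obtain ⟨K, hK⟩ := eventually_atTop.mp (hc.eventually (gt_mem_nhds hδ))
  refine ⟨t (K+1), fun s hs => ?_⟩
  have hex : ∃ m, s < t m := (htop.eventually_gt_atTop s).exists
  have hm_spec : s < t (Nat.find hex) := Nat.find_spec hex
  have hm0 : Nat.find hex ≠ 0 := by
    intro h
    rw [h] at hm_spec
    have h01 : t 0 ≤ t (K+1) := htmono.monotone (Nat.zero_le _)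
    linarith
  obtain ⟨k, hk⟩ := Nat.exists_eq_succ_of_ne_zero hm0
  rw [hk] at hm_spec
  have hks : t k ≤ s := by
    by_contra hlt
    push_neg at hlt
    exact Nat.find_min hex (by omega) hlt
  have hsk1 : s ≤ t (k+1) := hm_spec.le
  have hkK : K + 1 ≤ k := by
    by_contra hcon
    push_neg at hcon
    have h1 : t (k+1) ≤ t (K+1) := htmono.monotone (by omega)
    linarith
  have hb := hxb k s ⟨hks, hsk1⟩ a
  obtain ⟨k', rfl⟩ : ∃ k', k = k' + 1 := ⟨k - 1, by omega⟩
  have hlt : CM * ∑ b, |x (t (k'+1)) b| < δ := hK k' (by omega)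
  rw [Real.dist_eq, sub_zero]
  exact lt_of_le_of_lt hb hlt
end
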